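/- arXiv:1901.02323 — 5 statements merged into one kernel-verified Lean document; each statement's English description precedes it below -/
import Mathlib

section
/- Let (W,S) be a Coxeter system, r,t ∈ S with 3 ≤ m := order(rt) < ∞. The right star operation sending w = w̃·x̂k (the element of the right ⟨r,t⟩-string at position k, i.e. w̃ times the alternating word starting with x ∈ {r,t} of length k, for 1 ≤ k < m) to w̃·x̂(m−k), is a well-defined involution on the set D_R(r,t) = {w ∈ W : exactly one of r,t lies in the right descent set of w}. -/
/-- The alternating word `x y x y ⋯` of length `k`, starting with `x`. -/
def altWord {W : Type*} [Group W] : W → W → ℕ → W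
  | _, _, 0 => 1
  | x, y, k + 1 => x * altWord y x k

/-!
Write `r = s i`, `t = s j` and `m` for the order of `r t`. The parity of the number of occurrences
of a reflection in the left inversion sequence of a word depends only on the product of the word:
it is the left component of a lift of `W` to `(W → ℤˣ) ⋊ W`. Consequently a word whose left
inversion sequence has no repetition is reduced. If `w̃` has minimal length in its coset
`w̃ ⟨r, t⟩` and `k ≤ m`, the left inversion sequence of a reduced word of `w̃` followed by `x̂k` is
that of the first word followed by the conjugates of `(x y) ^ p x`, `p < k`, by `w̃`; these are
pairwise distinct and, by minimality, are not inversions of `w̃`. Hence `ℓ(w̃ x̂k) = ℓ(w̃) + k`.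
So for `0 < k < m` exactly the last letter of `x̂k` is a right descent of `w̃ x̂k`, and, as every
element of `⟨r, t⟩` is an alternating word of length at most `m`, the decomposition `w = w̃ x̂k`
is unique. Thus `w̃ x̂k ↦ w̃ x̂(m-k)`, extended by the identity off these strings, is well defined.
-/

section Dihedral

variable {G : Type*} [Group G]

theorem altWord_succ (x y : G) (k : ℕ) : altWord x y (k + 1) = x * altWord y x k := rfl

theorem altWord_two_mul (x y : G) (c : ℕ) : altWord x y (2 * c) = (x * y) ^ c := by
  induction c with
  | zero => rw [mul_zero, pow_zero]; rfl
  | succ c ih => rw [Nat.mul_succ, altWord_succ, altWord_succ, ih, pow_succ', mul_assoc]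

theorem altWord_succ_right (x y : G) (k : ℕ) :
    altWord x y (k + 1) = altWord x y k * if Even k then x else y := by
  induction k generalizing x y with
  | zero => simp [altWord]
  | succ k ih =>
    rw [altWord_succ, ih, altWord_succ, mul_assoc]
    by_cases h : Even k <;> simp [h, Nat.even_add_one]

theorem altWord_mem {H : Subgroup G} {x y : G} (hx : x ∈ H) (hy : y ∈ H) (k : ℕ) :
    altWord x y k ∈ H := by
  induction k generalizing x y with
  | zero => exact H.one_mem
  | succ k ih => exact H.mul_mem hx (ih hy hx)

variable {x y : G}

theorem altWord_mul_inv_altWord_swap (hx : x⁻¹ = x) (hy : y⁻¹ = y) (k : ℕ) :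
    altWord x y k * (altWord y x k)⁻¹ = (x * y) ^ k := by
  induction k generalizing x y with
  | zero => simp [altWord]
  | succ k ih =>
    rw [altWord_succ, altWord_succ, mul_inv_rev, hy, ← mul_assoc, mul_assoc x, ih hy hx,
      ← mul_pow_mul, pow_succ, mul_assoc]

theorem altWord_ne_altWord_swap (hx : x⁻¹ = x) (hy : y⁻¹ = y) {k : ℕ} (hk₀ : 0 < k)
    (hk : k < orderOf (x * y)) : altWord x y k ≠ altWord y x k := fun h ↦ by
  have := altWord_mul_inv_altWord_swap hx hy k
  rw [h, mul_inv_cancel, eq_comm] at this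
  exact absurd (Nat.le_of_dvd hk₀ (orderOf_dvd_of_pow_eq_one this)) (not_le.2 hk)

theorem altWord_orderOf_eq_swap (hx : x⁻¹ = x) (hy : y⁻¹ = y) :
    altWord x y (orderOf (x * y)) = altWord y x (orderOf (x * y)) := by
  rw [← mul_inv_eq_one, altWord_mul_inv_altWord_swap hx hy, pow_orderOf_eq_one]

theorem orderOf_mul_swap (hx : x⁻¹ = x) (hy : y⁻¹ = y) :
    orderOf (y * x) = orderOf (x * y) := by
  rw [← orderOf_inv, mul_inv_rev, hx, hy]

/-- Left multiplication by `x` moves along the two alternating strings of length `m`; the braid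
relation glues their far ends. -/
theorem exists_altWord_mul_of_braid (hx : x⁻¹ = x) {m : ℕ} (hm : 0 < m)
    (hbraid : altWord x y m = altWord y x m) {d : G}
    (hd : ∃ n ≤ m, d = altWord x y n ∨ d = altWord y x n) :
    ∃ n ≤ m, x * d = altWord x y n ∨ x * d = altWord y x n := by
  have hxx : ∀ z, x * (x * z) = z := fun z ↦ by simpa [hx] using inv_mul_cancel_left x z
  obtain ⟨n, hn, rfl | rfl⟩ := hd
  · cases n with
    | zero => exact ⟨1, hm, Or.inl (by simp [altWord])⟩
    | succ n => exact ⟨n, by omega, Or.inr (by rw [altWord_succ, hxx])⟩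
  · obtain hn | rfl := hn.lt_or_eq
    · exact ⟨n + 1, hn, Or.inl rfl⟩
    · obtain ⟨n, rfl⟩ := Nat.exists_eq_add_of_lt hm
      refine ⟨n, by omega, Or.inr ?_⟩
      rw [← hbraid, zero_add, altWord_succ, hxx]

theorem exists_altWord_of_mem_closure (hx : x⁻¹ = x) (hy : y⁻¹ = y) (hm : 0 < orderOf (x * y))
    {d : G} (hd : d ∈ Subgroup.closure {x, y}) :
    ∃ n ≤ orderOf (x * y), d = altWord x y n ∨ d = altWord y x n := by
  have hbraid := altWord_orderOf_eq_swap hx hy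
  have hmul : ∀ z ∈ ({x, y} : Set G), ∀ d : G,
      (∃ n ≤ orderOf (x * y), d = altWord x y n ∨ d = altWord y x n) →
      ∃ n ≤ orderOf (x * y), z * d = altWord x y n ∨ z * d = altWord y x n := by
    rintro z (rfl | rfl) d hd
    · exact exists_altWord_mul_of_braid hx hm hbraid hd
    · obtain ⟨n, hn, h⟩ := exists_altWord_mul_of_braid hy hm hbraid.symm
        (hd.imp fun _ ↦ And.imp_right Or.symm)
      exact ⟨n, hn, h.symm⟩
  induction hd using Subgroup.closure_induction_left with
  | one => exact ⟨0, Nat.zero_le _, Or.inl rfl⟩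
  | mul_left z hz d _ ih => exact hmul z hz d ih
  | inv_mul_cancel z hz d _ ih =>
    have hz' : z⁻¹ = z := by obtain rfl | rfl := hz; exacts [hx, hy]
    rw [hz']
    exact hmul z hz d ih

end Dihedral

theorem List.count_map_conj {G : Type*} [Group G] [DecidableEq G] (l : List G) (g t : G) :
    (l.map (MulAut.conj g)).count t = l.count (g⁻¹ * t * g) := by
  rw [← List.count_map_of_injective l _ (MulAut.conj g).injective]
  simp [mul_assoc]

section ConjSignAction

attribute [local instance] arrowAction arrowMulDistribMulAction

variable (G : Type*) [Group G]

def conjSignAction : G →* MulAut (G → ℤˣ) :=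
  (MulDistribMulAction.toMulAut (ConjAct G) (G → ℤˣ)).comp ConjAct.toConjAct.toMonoidHom

variable {G}

theorem conjSignAction_apply (g : G) (F : G → ℤˣ) (t : G) :
    conjSignAction G g F t = F (g⁻¹ * t * g) := by
  show F ((ConjAct.toConjAct g)⁻¹ • t) = _
  rw [← ConjAct.toConjAct_inv, ConjAct.toConjAct_smul, inv_inv]

end ConjSignAction

def altList {B : Type*} (a b : B) : ℕ → List B
  | 0 => []
  | k + 1 => a :: altList b a k

section AltList
variable {B : Type*}

@[simp]
theorem length_altList (a b : B) (k : ℕ) : (altList a b k).length = k := by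
  induction k generalizing a b with
  | zero => rfl
  | succ k ih => simp [altList, ih]

theorem prod_map_altList {G : Type*} [Group G] (f : B → G) (a b : B) (k : ℕ) :
    ((altList a b k).map f).prod = altWord (f a) (f b) k := by
  induction k generalizing a b with
  | zero => rfl
  | succ k ih => simp [altList, altWord, ih]

end AltList

namespace CoxeterSystem

variable {B W : Type*} [Group W] {M : CoxeterMatrix B} (cs : CoxeterSystem M W)

theorem wordProd_altList (a b : B) (k : ℕ) :
    cs.wordProd (altList a b k) = altWord (cs.simple a) (cs.simple b) k :=
  prod_map_altList _ a b k

theorem leftInvSeq_altList (a b : B) (k : ℕ) :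
    cs.leftInvSeq (altList a b k) =
      (List.range k).map fun p ↦ (cs.simple a * cs.simple b) ^ p * cs.simple a := by
  induction k generalizing a b with
  | zero => rfl
  | succ k ih =>
    rw [altList, leftInvSeq, ih, List.range_succ_eq_map, List.map_cons, List.map_map,
      List.map_map]
    congr 1
    · simp
    · refine List.map_congr_left fun p _ ↦ ?_
      simp only [Function.comp_apply, MulAut.conj_apply, cs.inv_simple, pow_succ']
      rw [← mul_assoc, ← mul_pow_mul, mul_assoc ((cs.simple a * cs.simple b) ^ p), ← pow_succ,
        pow_succ']

theorem leftInvSeq_append (ω ω' : List B) :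
    cs.leftInvSeq (ω ++ ω') =
      cs.leftInvSeq ω ++ (cs.leftInvSeq ω').map (MulAut.conj (cs.wordProd ω)) := by
  induction ω with
  | nil => simp [leftInvSeq]
  | cons b ω ih => simp [leftInvSeq, ih, cs.wordProd_cons, List.map_map]

section ReflectionCocycle

variable [DecidableEq W]

def reflectionCocycleGen (b : B) : (W → ℤˣ) ⋊[conjSignAction W] W :=
  ⟨Pi.mulSingle (cs.simple b) (-1), cs.simple b⟩

theorem prod_map_reflectionCocycleGen (ω : List B) :
    (ω.map cs.reflectionCocycleGen).prod =
      ⟨fun t ↦ (-1) ^ (cs.leftInvSeq ω).count t, cs.wordProd ω⟩ := by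
  induction ω with
  | nil => rfl
  | cons b ω ih =>
    rw [List.map_cons, List.prod_cons, ih]
    refine SemidirectProduct.ext ?_ (by simp [reflectionCocycleGen, cs.wordProd_cons])
    funext t
    simp only [reflectionCocycleGen, SemidirectProduct.mul_left, Pi.mul_apply,
      conjSignAction_apply, leftInvSeq, List.count_cons, List.count_map_conj, cs.inv_simple]
    rw [pow_add, mul_comm]
    by_cases h : t = cs.simple b
    · simp [h]
    · simp [h, Ne.symm h]

theorem isLiftable_reflectionCocycleGen : M.IsLiftable cs.reflectionCocycleGen := by
  intro a b
  rw [← altWord_two_mul, ← prod_map_altList, prod_map_reflectionCocycleGen]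
  refine SemidirectProduct.ext ?_ ?_
  · funext t
    -- `(s a * s b) ^ M a b = 1`, so each reflection in the list occurs an even number of times
    have hperiod (p : ℕ) :
        (cs.simple a * cs.simple b) ^ (M a b + p) = (cs.simple a * cs.simple b) ^ p := by
      rw [pow_add, cs.simple_mul_simple_pow, one_mul]
    simp only [leftInvSeq_altList, two_mul, List.range_add, List.map_append, List.map_map,
      Function.comp_def, hperiod, List.count_append, pow_add, Int.units_mul_self]
    rfl
  · simp [wordProd_altList, altWord_two_mul, cs.simple_mul_simple_pow]

noncomputable def reflectionCocycle : W →* (W → ℤˣ) ⋊[conjSignAction W] W :=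
  cs.lift ⟨_, cs.isLiftable_reflectionCocycleGen⟩

theorem reflectionCocycle_wordProd (ω : List B) :
    cs.reflectionCocycle (cs.wordProd ω) =
      ⟨fun t ↦ (-1) ^ (cs.leftInvSeq ω).count t, cs.wordProd ω⟩ := by
  rw [← prod_map_reflectionCocycleGen, wordProd, map_list_prod, List.map_map]
  congr 1
  exact List.map_congr_left fun b _ ↦ cs.lift_apply_simple cs.isLiftable_reflectionCocycleGen b

theorem neg_one_pow_count_leftInvSeq_eq {ω ω' : List B} (h : cs.wordProd ω = cs.wordProd ω')
    (t : W) : (-1 : ℤˣ) ^ (cs.leftInvSeq ω).count t = (-1) ^ (cs.leftInvSeq ω').count t := by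
  simpa only [reflectionCocycle_wordProd] using
    congrArg (fun z ↦ z.left t) (congrArg cs.reflectionCocycle h)

end ReflectionCocycle

theorem isReduced_of_nodup_leftInvSeq {ω : List B} (h : (cs.leftInvSeq ω).Nodup) :
    cs.IsReduced ω := by
  classical
  obtain ⟨ω', hω', hπ⟩ := cs.exists_isReduced (cs.wordProd ω)
  have hsub : cs.leftInvSeq ω ⊆ cs.leftInvSeq ω' := fun t ht ↦ by
    by_contra ht'
    have := cs.neg_one_pow_count_leftInvSeq_eq hπ t
    rw [List.count_eq_one_of_mem h ht, List.count_eq_zero_of_not_mem ht'] at this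
    exact absurd this (by decide)
  have hle := h.length_le_of_subset hsub
  simp only [length_leftInvSeq] at hle
  refine le_antisymm (cs.length_wordProd_le ω) ?_
  rwa [hπ, hω'.eq]

def IsMinCosetRep (H : Subgroup W) (w : W) : Prop :=
  ∀ d ∈ H, cs.length w ≤ cs.length (w * d)

theorem length_mul_altWord {H : Subgroup W} {wt : W} (hmin : cs.IsMinCosetRep H wt) {a b : B}
    (ha : cs.simple a ∈ H) (hb : cs.simple b ∈ H) {k : ℕ}
    (hk : k ≤ orderOf (cs.simple a * cs.simple b)) :
    cs.length (wt * altWord (cs.simple a) (cs.simple b) k) = cs.length wt + k := by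
  obtain ⟨ω, hω, rfl⟩ := cs.exists_isReduced wt
  have hred : cs.IsReduced (ω ++ altList a b k) := by
    apply cs.isReduced_of_nodup_leftInvSeq
    rw [leftInvSeq_append, leftInvSeq_altList, List.map_map, List.nodup_append]
    refine ⟨hω.nodup_leftInvSeq, List.nodup_range.map_on fun p hp q hq hpq ↦ ?_, ?_⟩
    · simp only [Function.comp_apply, (MulAut.conj _).injective.eq_iff, mul_left_inj] at hpq
      simp only [List.mem_range] at hp hq
      exact pow_injOn_Iio_orderOf (by omega : p < _) (by omega : q < _) hpq
    · rintro _ ht _ hu rfl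
      obtain ⟨p, -, rfl⟩ := List.mem_map.1 hu
      have hinv := (cs.isLeftInversion_of_mem_leftInvSeq hω ht).2
      simp only [Function.comp_apply, MulAut.conj_apply, inv_mul_cancel_right] at hinv
      exact absurd (hmin _ (H.mul_mem (H.pow_mem (H.mul_mem ha hb) p) ha)) (not_le.2 hinv)
  have := hred.eq
  rwa [cs.wordProd_append, wordProd_altList, List.length_append, length_altList, ← hω.eq] at this

theorem xor_isRightDescent_mul_altWord {H : Subgroup W} {wt : W} (hmin : cs.IsMinCosetRep H wt)
    {a b : B} (ha : cs.simple a ∈ H) (hb : cs.simple b ∈ H) {k : ℕ} (hk₀ : 0 < k)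
    (hk : k < orderOf (cs.simple a * cs.simple b)) :
    Xor' (cs.IsRightDescent (wt * altWord (cs.simple a) (cs.simple b) k) a)
      (cs.IsRightDescent (wt * altWord (cs.simple a) (cs.simple b) k) b) := by
  obtain ⟨n, rfl⟩ : ∃ n, k = n + 1 := ⟨k - 1, by omega⟩
  have hlen (l : ℕ) (hl : l ≤ n + 2) := cs.length_mul_altWord hmin ha hb (k := l) (by omega)
  have hsucc (l : ℕ) : altWord (cs.simple a) (cs.simple b) (l + 1) =
      altWord (cs.simple a) (cs.simple b) l * cs.simple (if Even l then a else b) := by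
    rw [altWord_succ_right, apply_ite cs.simple]
  have hdesc : cs.IsRightDescent (wt * altWord (cs.simple a) (cs.simple b) (n + 1))
      (if Even n then a else b) := by
    rw [IsRightDescent, hsucc, ← mul_assoc wt, simple_mul_simple_cancel_right, mul_assoc,
      ← hsucc, hlen n (by omega), hlen (n + 1) (by omega)]
    omega
  have hasc : ¬ cs.IsRightDescent (wt * altWord (cs.simple a) (cs.simple b) (n + 1))
      (if Even (n + 1) then a else b) := by
    rw [IsRightDescent, mul_assoc, ← hsucc, hlen (n + 2) le_rfl, hlen (n + 1) (by omega)]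
    omega
  by_cases he : Even n
  · simp only [he, if_true, Nat.even_add_one, not_true, if_false] at hdesc hasc
    exact Or.inl ⟨hdesc, hasc⟩
  · simp only [he, if_false, Nat.even_add_one, not_false_eq_true, if_true] at hdesc hasc
    exact Or.inr ⟨hdesc, hasc⟩

section RightStar

variable (i j : B)

def IsSimplePair (x y : W) : Prop :=
  (x, y) = (cs.simple i, cs.simple j) ∨ (x, y) = (cs.simple j, cs.simple i)

/-- `(wt, x, y, k)` encodes the paper's `w = w̃ · x̂k`. -/
def IsRightStringPos (w : W) : W × W × W × ℕ → Prop
  | (wt, x, y, k) =>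
    cs.IsSimplePair i j x y ∧ 1 ≤ k ∧ k < orderOf (cs.simple i * cs.simple j) ∧
      cs.IsMinCosetRep (Subgroup.closure {cs.simple i, cs.simple j}) wt ∧ w = wt * altWord x y k

open Classical in
noncomputable def rightStar (w : W) : W :=
  if h : ∃ q, cs.IsRightStringPos i j w q then
    h.choose.1 * altWord h.choose.2.1 h.choose.2.2.1
      (orderOf (cs.simple i * cs.simple j) - h.choose.2.2.2)
  else w

variable {cs i j} {x y wt : W}

theorem IsSimplePair.mem_closure (hxy : cs.IsSimplePair i j x y) :
    x ∈ Subgroup.closure {cs.simple i, cs.simple j} ∧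
      y ∈ Subgroup.closure {cs.simple i, cs.simple j} := by
  rcases hxy with h | h <;> obtain ⟨rfl, rfl⟩ := Prod.mk.inj h <;>
    exact ⟨Subgroup.subset_closure (by simp), Subgroup.subset_closure (by simp)⟩

theorem IsSimplePair.length_mul_altWord (hxy : cs.IsSimplePair i j x y)
    (hmin : cs.IsMinCosetRep (Subgroup.closure {cs.simple i, cs.simple j}) wt) {k : ℕ}
    (hk : k ≤ orderOf (cs.simple i * cs.simple j)) :
    cs.length (wt * altWord x y k) = cs.length wt + k := by
  obtain ⟨hx, hy⟩ := hxy.mem_closure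
  rcases hxy with h | h <;> obtain ⟨rfl, rfl⟩ := Prod.mk.inj h
  · exact cs.length_mul_altWord hmin hx hy hk
  · rw [← orderOf_mul_swap (cs.inv_simple i) (cs.inv_simple j)] at hk
    exact cs.length_mul_altWord hmin hx hy hk

theorem IsSimplePair.length_altWord (hxy : cs.IsSimplePair i j x y) {k : ℕ}
    (hk : k ≤ orderOf (cs.simple i * cs.simple j)) : cs.length (altWord x y k) = k := by
  simpa using hxy.length_mul_altWord (wt := 1) (fun d _ ↦ by simp) hk

theorem IsSimplePair.eq_of_altWord_eq (hxy : cs.IsSimplePair i j x y) {x' y' : W}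
    (hxy' : cs.IsSimplePair i j x' y') {k : ℕ} (hk₀ : 0 < k)
    (hk : k < orderOf (cs.simple i * cs.simple j)) (h : altWord x y k = altWord x' y' k) :
    x = x' ∧ y = y' := by
  have hswap := orderOf_mul_swap (cs.inv_simple i) (cs.inv_simple j)
  rcases hxy with hxy | hxy <;> rcases hxy' with hxy' | hxy' <;>
    obtain ⟨rfl, rfl⟩ := Prod.mk.inj hxy <;> obtain ⟨rfl, rfl⟩ := Prod.mk.inj hxy'
  · exact ⟨rfl, rfl⟩
  · exact absurd h (altWord_ne_altWord_swap (cs.inv_simple i) (cs.inv_simple j) hk₀ hk)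
  · exact absurd h
      (altWord_ne_altWord_swap (cs.inv_simple j) (cs.inv_simple i) hk₀ (hswap ▸ hk))
  · exact ⟨rfl, rfl⟩

theorem IsMinCosetRep.eq_of_inv_mul_mem {wt' : W}
    (hmin : cs.IsMinCosetRep (Subgroup.closure {cs.simple i, cs.simple j}) wt)
    (hmin' : cs.IsMinCosetRep (Subgroup.closure {cs.simple i, cs.simple j}) wt')
    (hm : 0 < orderOf (cs.simple i * cs.simple j))
    (hd : wt⁻¹ * wt' ∈ Subgroup.closure {cs.simple i, cs.simple j}) : wt = wt' := by
  have hle : cs.length wt' ≤ cs.length wt := by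
    simpa using hmin' _ (Subgroup.inv_mem _ hd)
  obtain ⟨x, y, n, hxy, hn, hd⟩ : ∃ x y n, cs.IsSimplePair i j x y ∧
      n ≤ orderOf (cs.simple i * cs.simple j) ∧ wt⁻¹ * wt' = altWord x y n := by
    obtain ⟨n, hn, hd | hd⟩ :=
      exists_altWord_of_mem_closure (cs.inv_simple i) (cs.inv_simple j) hm hd
    exacts [⟨_, _, n, Or.inl rfl, hn, hd⟩, ⟨_, _, n, Or.inr rfl, hn, hd⟩]
  have hlen := hxy.length_mul_altWord hmin hn
  rw [← hd, mul_inv_cancel_left] at hlen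
  obtain rfl : n = 0 := by omega
  rw [← mul_inv_cancel_left wt wt', hd, altWord, mul_one]

theorem IsRightStringPos.unique {w : W} {q q' : W × W × W × ℕ}
    (h : cs.IsRightStringPos i j w q) (h' : cs.IsRightStringPos i j w q') : q = q' := by
  obtain ⟨wt, x, y, k⟩ := q
  obtain ⟨wt', x', y', k'⟩ := q'
  obtain ⟨hxy, hk₀, hk, hmin, rfl⟩ := h
  obtain ⟨hxy', -, hk', hmin', heq⟩ := h'
  have hmem {x y : W} (hxy : cs.IsSimplePair i j x y) (k : ℕ) :=
    altWord_mem hxy.mem_closure.1 hxy.mem_closure.2 k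
  obtain rfl : wt = wt' := by
    refine hmin.eq_of_inv_mul_mem hmin' (by omega) ?_
    rw [show wt⁻¹ * wt' = altWord x y k * (altWord x' y' k')⁻¹ by
      rw [inv_mul_eq_iff_eq_mul, ← mul_assoc, heq, mul_inv_cancel_right]]
    exact Subgroup.mul_mem _ (hmem hxy k) (Subgroup.inv_mem _ (hmem hxy' k'))
  have hu := mul_left_cancel heq
  obtain rfl : k = k' := by
    rw [← hxy.length_altWord hk.le, hu, hxy'.length_altWord hk'.le]
  obtain ⟨rfl, rfl⟩ := hxy.eq_of_altWord_eq hxy' hk₀ hk hu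
  rfl

theorem IsRightStringPos.rightStar_eq {w : W} {k : ℕ}
    (h : cs.IsRightStringPos i j w (wt, x, y, k)) :
    cs.rightStar i j w = wt * altWord x y (orderOf (cs.simple i * cs.simple j) - k) := by
  have hex : ∃ q, cs.IsRightStringPos i j w q := ⟨_, h⟩
  rw [rightStar, dif_pos hex, hex.choose_spec.unique h]

theorem rightStar_of_not_exists {w : W} (h : ¬∃ q, cs.IsRightStringPos i j w q) :
    cs.rightStar i j w = w :=
  dif_neg h

theorem IsRightStringPos.complement {w : W} {k : ℕ}
    (h : cs.IsRightStringPos i j w (wt, x, y, k)) :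
    cs.IsRightStringPos i j (wt * altWord x y (orderOf (cs.simple i * cs.simple j) - k))
      (wt, x, y, orderOf (cs.simple i * cs.simple j) - k) := by
  obtain ⟨hxy, hk₀, hk, hmin, -⟩ := h
  exact ⟨hxy, by omega, by omega, hmin, rfl⟩

theorem IsRightStringPos.xor_isRightDescent {w : W} {q : W × W × W × ℕ}
    (h : cs.IsRightStringPos i j w q) :
    Xor' (cs.IsRightDescent w i) (cs.IsRightDescent w j) := by
  obtain ⟨wt, x, y, k⟩ := q
  obtain ⟨hxy, hk₀, hk, hmin, rfl⟩ := h
  obtain ⟨hx, hy⟩ := hxy.mem_closure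
  rcases hxy with h | h <;> obtain ⟨rfl, rfl⟩ := Prod.mk.inj h
  · exact cs.xor_isRightDescent_mul_altWord hmin hx hy hk₀ hk
  · rw [← orderOf_mul_swap (cs.inv_simple i) (cs.inv_simple j)] at hk
    exact (cs.xor_isRightDescent_mul_altWord hmin hx hy hk₀ hk).symm

variable (cs)

theorem xor_isRightDescent_rightStar {w : W}
    (hw : Xor' (cs.IsRightDescent w i) (cs.IsRightDescent w j)) :
    Xor' (cs.IsRightDescent (cs.rightStar i j w) i) (cs.IsRightDescent (cs.rightStar i j w) j) := by
  by_cases hpos : ∃ q, cs.IsRightStringPos i j w q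
  · obtain ⟨⟨wt, x, y, k⟩, hq⟩ := hpos
    rw [hq.rightStar_eq]
    exact hq.complement.xor_isRightDescent
  · rwa [rightStar_of_not_exists hpos]

theorem rightStar_rightStar (w : W) : cs.rightStar i j (cs.rightStar i j w) = w := by
  by_cases hpos : ∃ q, cs.IsRightStringPos i j w q
  · obtain ⟨⟨wt, x, y, k⟩, hq⟩ := hpos
    obtain ⟨-, hk₀, hk, -, rfl⟩ := id hq
    rw [hq.rightStar_eq, hq.complement.rightStar_eq, Nat.sub_sub_self hk.le]
  · rw [rightStar_of_not_exists hpos, rightStar_of_not_exists hpos]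

end RightStar

end CoxeterSystem

theorem stmt_3_general {B W : Type*} [Group W] {M : CoxeterMatrix B} (cs : CoxeterSystem M W)
    (i j : B) :
    ∃ star : W → W,
      (∀ w : W, Xor' (cs.IsRightDescent w i) (cs.IsRightDescent w j) →
        Xor' (cs.IsRightDescent (star w) i) (cs.IsRightDescent (star w) j)) ∧
      (∀ w : W, Xor' (cs.IsRightDescent w i) (cs.IsRightDescent w j) →
        star (star w) = w) ∧
      (∀ (wt x y : W) (k : ℕ),
        ((x, y) = (cs.simple i, cs.simple j) ∨ (x, y) = (cs.simple j, cs.simple i)) →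
        1 ≤ k → k < orderOf (cs.simple i * cs.simple j) →
        (∀ d ∈ Subgroup.closure {cs.simple i, cs.simple j},
          cs.length wt ≤ cs.length (wt * d)) →
        star (wt * altWord x y k) =
          wt * altWord x y (orderOf (cs.simple i * cs.simple j) - k)) :=
  ⟨cs.rightStar i j, fun _ ↦ cs.xor_isRightDescent_rightStar,
    fun w _ ↦ cs.rightStar_rightStar w,
    fun _ _ _ _ hxy hk₀ hk hmin ↦ CoxeterSystem.IsRightStringPos.rightStar_eq
      ⟨hxy, hk₀, hk, hmin, rfl⟩⟩

/-- For distinct simple reflections `r = s i`, `t = s j` with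
`3 ≤ m := order(rt) < ∞`, the right star operation sending `w̃ ⬝ x̂k ↦ w̃ ⬝ x̂(m-k)`
(for `1 ≤ k < m`) is a well-defined involution on
`D_R(r,t) = {w : exactly one of r, t is a right descent of w}`. -/
theorem stmt_3 {B W : Type*} [Group W] {M : CoxeterMatrix B} (cs : CoxeterSystem M W)
    (i j : B) (hij : cs.simple i ≠ cs.simple j)
    (hm : 3 ≤ orderOf (cs.simple i * cs.simple j)) :
    ∃ star : W → W,
      (∀ w : W, Xor' (cs.IsRightDescent w i) (cs.IsRightDescent w j) →
        Xor' (cs.IsRightDescent (star w) i) (cs.IsRightDescent (star w) j)) ∧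
      (∀ w : W, Xor' (cs.IsRightDescent w i) (cs.IsRightDescent w j) →
        star (star w) = w) ∧
      (∀ (wt x y : W) (k : ℕ),
        ((x, y) = (cs.simple i, cs.simple j) ∨ (x, y) = (cs.simple j, cs.simple i)) →
        1 ≤ k → k < orderOf (cs.simple i * cs.simple j) →
        (∀ d ∈ Subgroup.closure {cs.simple i, cs.simple j},
          cs.length wt ≤ cs.length (wt * d)) →
        star (wt * altWord x y k) =
          wt * altWord x y (orderOf (cs.simple i * cs.simple j) - k)) :=
  stmt_3_general cs i j
end

section
/- Let (W,S) be a Coxeter system with z < w in Bruhat order and r ∈ S a simple reflection lying in the right descent set of w but not of z. If μ(z,w) ≠ 0 then w = zr, and in that case μ(z,w) = 1. Here μ(z,w) denotes the coefficient of v in the Kazhdan–Lusztig polynomial h_{z,w}. -/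
/-!
Write `v = T 1`, let `s` be a right descent of `w` and put `D = b_w H_s - v⁻¹ b_w`. Then `D` is
bar invariant and `D H_s = -v D`. At an element `x` of maximal length in the support of `D`, the
second property forces `xs < x`, so the coefficient `D_x = h_{xs,w} - v h_{x,w}` lies in
`vℤ[v]`; since the bar involution is unitriangular with respect to length, `D_x` is also bar
invariant, hence zero. So `b_w H_s = v⁻¹ b_w`, and comparing coefficients of `H_z` for `zs > z`
gives `h_{zs,w} = v⁻¹ h_{z,w}`: the coefficient of `v` in `h_{z,w}` is the constant term of
`h_{zs,w}`, which vanishes unless `zs = w`.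
-/

open LaurentPolynomial

variable {B W : Type*} [Group W] {M : CoxeterMatrix B}

/-- The Bruhat order on a Coxeter group: generated by `a → a*t` for reflections `t`
increasing the length. -/
def bruhatLE (cs : CoxeterSystem M W) : W → W → Prop :=
  Relation.ReflTransGen
    (fun a b => ∃ t, cs.IsReflection t ∧ b = a * t ∧ cs.length a < cs.length b)

/-- Strict Bruhat order. -/
def bruhatLT (cs : CoxeterSystem M W) (a b : W) : Prop := bruhatLE cs a b ∧ a ≠ b

namespace LaurentPolynomial

theorem coeff_T_mul {R : Type*} [Semiring R] (p : R[T;T⁻¹]) (m n : ℤ) :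
    (T m * p).coeff n = p.coeff (n - m) := by
  rw [T, AddMonoidAlgebra.coeff_single_mul_apply, one_mul, neg_add_eq_sub]

theorem eq_zero_of_invert_eq_self {R : Type*} [CommSemiring R] {p : R[T;T⁻¹]}
    (hp : invert p = p) (hnonpos : ∀ n ≤ 0, p.coeff n = 0) : p = 0 := by
  ext n
  rcases le_or_gt n 0 with hn | hn
  · exact hnonpos n hn
  · rw [← hp, invert_apply]
    exact hnonpos (-n) (by omega)

end LaurentPolynomial

section Hecke

variable {R H : Type*} [CommRing R] [Ring H] [Algebra R[T;T⁻¹] H]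

structure IsHeckeStandardBasis (cs : CoxeterSystem M W) (std : Module.Basis W R[T;T⁻¹] H) :
    Prop where
  one : std 1 = 1
  mul_of_length_add : ∀ a c : W, cs.length (a * c) = cs.length a + cs.length c →
    std a * std c = std (a * c)
  mul_self_simple : ∀ i : B, std (cs.simple i) * std (cs.simple i) =
    (T (-1) - T 1 : R[T;T⁻¹]) • std (cs.simple i) + 1

structure IsBarInvolution (std : Module.Basis W R[T;T⁻¹] H) (σ : H →+* H) : Prop where
  map_smul : ∀ (p : R[T;T⁻¹]) (a : H), σ (p • a) = invert p • σ a
  map_std_mul_std_inv : ∀ w : W, σ (std w) * std w⁻¹ = 1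

namespace IsHeckeStandardBasis

variable {cs : CoxeterSystem M W} {std : Module.Basis W R[T;T⁻¹] H}

theorem std_mul_simple_of_not_isRightDescent (hH : IsHeckeStandardBasis cs std) {u : W} {i : B}
    (hu : ¬ cs.IsRightDescent u i) : std u * std (cs.simple i) = std (u * cs.simple i) :=
  hH.mul_of_length_add _ _ (by rw [cs.length_simple, cs.not_isRightDescent_iff.mp hu])

theorem std_mul_simple_of_isRightDescent (hH : IsHeckeStandardBasis cs std) {u : W} {i : B}
    (hu : cs.IsRightDescent u i) : std u * std (cs.simple i) =
      std (u * cs.simple i) + (T (-1) - T 1 : R[T;T⁻¹]) • std u := by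
  have hdown : std (u * cs.simple i) * std (cs.simple i) = std u := by
    rw [hH.std_mul_simple_of_not_isRightDescent
      (cs.isRightDescent_iff_not_isRightDescent_mul.mp hu), cs.simple_mul_simple_cancel_right]
  calc std u * std (cs.simple i)
      = std (u * cs.simple i) * (std (cs.simple i) * std (cs.simple i)) := by
        rw [← mul_assoc, hdown]
    _ = std (u * cs.simple i) + (T (-1) - T 1 : R[T;T⁻¹]) • std u := by
        rw [hH.mul_self_simple, mul_add, mul_one, mul_smul_comm, hdown, add_comm]

open Classical in
theorem repr_std_mul_simple (hH : IsHeckeStandardBasis cs std) (u x : W) (i : B) :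
    std.repr (std u * std (cs.simple i)) x = std.repr (std u) (x * cs.simple i) +
      (if cs.IsRightDescent x i then (T (-1) - T 1 : R[T;T⁻¹]) else 0) * std.repr (std u) x := by
  have hne : u * cs.simple i ≠ u := fun h => cs.length_mul_simple_ne u i (congrArg _ h)
  have hiff : u * cs.simple i = x ↔ u = x * cs.simple i := by
    constructor
    · rintro rfl
      exact (cs.simple_mul_simple_cancel_right i).symm
    · rintro rfl
      exact cs.simple_mul_simple_cancel_right i
  by_cases hu : cs.IsRightDescent u i
  · rw [hH.std_mul_simple_of_isRightDescent hu]
    by_cases hux : u = x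
    · subst hux
      simp [hne, Ne.symm hne, hu]
    · simp [Finsupp.single_apply, hux, hiff]
  · rw [hH.std_mul_simple_of_not_isRightDescent hu]
    by_cases hux : u = x
    · subst hux
      simp [hne, Ne.symm hne, hu]
    · simp [Finsupp.single_apply, hux, hiff]

open Classical in
theorem repr_mul_simple (hH : IsHeckeStandardBasis cs std) (a : H) (x : W) (i : B) :
    std.repr (a * std (cs.simple i)) x = std.repr a (x * cs.simple i) +
      (if cs.IsRightDescent x i then (T (-1) - T 1 : R[T;T⁻¹]) else 0) * std.repr a x := by
  have hlin : Finsupp.lapply x ∘ₗ std.repr.toLinearMap ∘ₗ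
        LinearMap.mulRight _ (std (cs.simple i)) =
      Finsupp.lapply (x * cs.simple i) ∘ₗ std.repr.toLinearMap +
        (if cs.IsRightDescent x i then (T (-1) - T 1 : R[T;T⁻¹]) else 0) •
          (Finsupp.lapply x ∘ₗ std.repr.toLinearMap) :=
    std.ext fun u => hH.repr_std_mul_simple u x i
  exact LinearMap.congr_fun hlin a

theorem isRightDescent_of_mul_simple_eq_smul (hH : IsHeckeStandardBasis cs std) {a : H}
    {i : B} {c : R[T;T⁻¹]} (ha : a * std (cs.simple i) = c • a) {x : W}
    (hx : std.repr a x ≠ 0)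
    (hmax : ∀ y, std.repr a y ≠ 0 → cs.length y ≤ cs.length x) : cs.IsRightDescent x i := by
  by_contra hnd
  have hup : std.repr a (x * cs.simple i) = 0 := by
    by_contra hne
    have := hmax _ hne
    rw [cs.not_isRightDescent_iff.mp hnd] at this
    omega
  have hcoeff := hH.repr_mul_simple a (x * cs.simple i) i
  rw [ha, cs.simple_mul_simple_cancel_right, hup, mul_zero, add_zero, map_smul,
    Finsupp.smul_apply, hup, smul_zero] at hcoeff
  exact hx hcoeff.symm

theorem bar_std_simple (hH : IsHeckeStandardBasis cs std) {σ : H →+* H}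
    (hσ : IsBarInvolution std σ) (i : B) :
    σ (std (cs.simple i)) = std (cs.simple i) + (T 1 - T (-1) : R[T;T⁻¹]) • 1 := by
  have hinv : std (cs.simple i) * (std (cs.simple i) + (T 1 - T (-1) : R[T;T⁻¹]) • 1) = 1 := by
    rw [mul_add, hH.mul_self_simple, mul_smul_comm, mul_one]
    module
  have hσs : σ (std (cs.simple i)) * std (cs.simple i) = 1 := by
    simpa [cs.inv_simple] using hσ.map_std_mul_std_inv (cs.simple i)
  calc σ (std (cs.simple i))
      = σ (std (cs.simple i)) * (std (cs.simple i) *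
          (std (cs.simple i) + (T 1 - T (-1) : R[T;T⁻¹]) • 1)) := by rw [hinv, mul_one]
    _ = std (cs.simple i) + (T 1 - T (-1) : R[T;T⁻¹]) • 1 := by
        rw [← mul_assoc, hσs, one_mul]

theorem bar_std_mul_simple (hH : IsHeckeStandardBasis cs std) {σ : H →+* H}
    (hσ : IsBarInvolution std σ) {u : W} {i : B} (hu : ¬ cs.IsRightDescent u i) :
    σ (std (u * cs.simple i)) =
      σ (std u) * std (cs.simple i) + (T 1 - T (-1) : R[T;T⁻¹]) • σ (std u) := by
  rw [← hH.std_mul_simple_of_not_isRightDescent hu, map_mul, hH.bar_std_simple hσ, mul_add,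
    mul_smul_comm, mul_one]

open Classical in
theorem repr_bar_std_mul_simple (hH : IsHeckeStandardBasis cs std) {σ : H →+* H}
    (hσ : IsBarInvolution std σ) {u : W} {i : B} (hu : ¬ cs.IsRightDescent u i) (y : W) :
    std.repr (σ (std (u * cs.simple i))) y = std.repr (σ (std u)) (y * cs.simple i) +
      ((if cs.IsRightDescent y i then (T (-1) - T 1 : R[T;T⁻¹]) else 0) + (T 1 - T (-1))) *
        std.repr (σ (std u)) y := by
  rw [hH.bar_std_mul_simple hσ hu, map_add, map_smul, Finsupp.add_apply, Finsupp.smul_apply,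
    smul_eq_mul, hH.repr_mul_simple]
  ring

theorem bar_std_unitriangular (hH : IsHeckeStandardBasis cs std) {σ : H →+* H}
    (hσ : IsBarInvolution std σ) (x : W) :
    std.repr (σ (std x)) x = 1 ∧
      ∀ y, std.repr (σ (std x)) y ≠ 0 → y = x ∨ cs.length y < cs.length x := by
  induction hn : cs.length x using Nat.strong_induction_on generalizing x with
  | _ n ih =>
  subst hn
  by_cases hx1 : x = 1
  · subst hx1
    have hbar_one : σ (std 1) = std 1 := by rw [hH.one, map_one]
    refine ⟨by simp [hbar_one], fun y hy => .inl ?_⟩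
    by_contra hne
    simp [hbar_one, Ne.symm hne] at hy
  obtain ⟨i, hi⟩ := cs.exists_rightDescent_of_ne_one hx1
  set u := x * cs.simple i
  have hu : ¬ cs.IsRightDescent u i := cs.isRightDescent_iff_not_isRightDescent_mul.mp hi
  have hlen : cs.length u + 1 = cs.length x := cs.isRightDescent_iff.mp hi
  have hrepr := hH.repr_bar_std_mul_simple hσ hu
  rw [cs.simple_mul_simple_cancel_right] at hrepr
  obtain ⟨ih_diag, ih_supp⟩ := ih _ (by omega) u rfl
  have hzero : std.repr (σ (std u)) x = 0 := by
    by_contra hne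
    rcases ih_supp x hne with h | h
    · have := congrArg cs.length h
      omega
    · omega
  refine ⟨?_, fun y hy => ?_⟩
  · rw [hrepr, show x * cs.simple i = u from rfl, ih_diag, hzero]
    ring
  · rw [hrepr] at hy
    have hys := cs.length_le_length_mul_add_right y (cs.simple i)
    rw [cs.length_simple] at hys
    by_cases hys0 : std.repr (σ (std u)) (y * cs.simple i) = 0
    · rw [hys0, zero_add] at hy
      rcases ih_supp y (right_ne_zero_of_mul hy) with rfl | h <;> omega
    · rcases ih_supp _ hys0 with h | h
      · left
        rw [← cs.simple_mul_simple_cancel_right (w := y) i, h]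
        exact cs.simple_mul_simple_cancel_right i
      · omega

theorem repr_bar_of_forall_length_le (hH : IsHeckeStandardBasis cs std) {σ : H →+* H}
    (hσ : IsBarInvolution std σ) {a : H} {x : W}
    (hmax : ∀ y, std.repr a y ≠ 0 → cs.length y ≤ cs.length x) :
    std.repr (σ a) x = invert (std.repr a x) := by
  conv_lhs => rw [← std.linearCombination_repr a]
  rw [Finsupp.linearCombination_apply, map_finsuppSum, map_finsuppSum, Finsupp.sum_apply,
    Finsupp.sum, Finset.sum_eq_single x]
  · rw [hσ.map_smul, map_smul, Finsupp.smul_apply, (hH.bar_std_unitriangular hσ x).1,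
      smul_eq_mul, mul_one]
  · intro u hu hux
    have hzero : std.repr (σ (std u)) x = 0 := by
      by_contra hne
      have := hmax u (Finsupp.mem_support_iff.mp hu)
      rcases (hH.bar_std_unitriangular hσ u).2 x hne with h | h
      · exact hux h.symm
      · omega
    rw [hσ.map_smul, map_smul, Finsupp.smul_apply, hzero, smul_zero]
  · intro hx
    rw [Finsupp.notMem_support_iff.mp hx, zero_smul, map_zero, map_zero, Finsupp.zero_apply]

theorem eq_zero_of_bar_eq_self (hH : IsHeckeStandardBasis cs std) {σ : H →+* H}
    (hσ : IsBarInvolution std σ) {a : H} (ha : σ a = a)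
    (htop : ∀ x, std.repr a x ≠ 0 →
      (∀ y, std.repr a y ≠ 0 → cs.length y ≤ cs.length x) →
      ∀ n ≤ 0, (std.repr a x).coeff n = 0) :
    a = 0 := by
  by_contra hne
  have hsupp : (std.repr a).support.Nonempty := by
    rwa [Finsupp.support_nonempty_iff, ne_eq, LinearEquiv.map_eq_zero_iff]
  obtain ⟨x, hx, hmax⟩ := (std.repr a).support.exists_max_image cs.length hsupp
  have hx : std.repr a x ≠ 0 := Finsupp.mem_support_iff.mp hx
  have hmax : ∀ y, std.repr a y ≠ 0 → cs.length y ≤ cs.length x :=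
    fun y hy => hmax y (Finsupp.mem_support_iff.mpr hy)
  refine hx (eq_zero_of_invert_eq_self ?_ (htop x hx hmax))
  rw [← hH.repr_bar_of_forall_length_le hσ hmax, ha]

theorem mul_simple_eq_smul_of_isRightDescent (hH : IsHeckeStandardBasis cs std) {σ : H →+* H}
    (hσ : IsBarInvolution std σ) {C : H} {w : W} {i : B} (hC : σ C = C)
    (hCw : std.repr C w = 1) (hCpos : ∀ x ≠ w, ∀ n ≤ 0, (std.repr C x).coeff n = 0)
    (hw : cs.IsRightDescent w i) :
    C * std (cs.simple i) = (T (-1) : R[T;T⁻¹]) • C := by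
  have hT : (T 1 : R[T;T⁻¹]) * T (-1) = 1 := by rw [← T_add, add_neg_cancel, T_zero]
  set D := C * std (cs.simple i) - (T (-1) : R[T;T⁻¹]) • C
  have hDs : D * std (cs.simple i) = (-T 1 : R[T;T⁻¹]) • D := by
    have hT' : (-T 1 : R[T;T⁻¹]) • (T (-1) : R[T;T⁻¹]) • C = -C := by
      rw [smul_smul, neg_mul, hT, neg_one_smul]
    rw [sub_mul, mul_assoc, hH.mul_self_simple, smul_mul_assoc, smul_sub, hT', mul_add,
      mul_one, mul_smul_comm]
    module
  have hσD : σ D = D := by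
    rw [map_sub, map_mul, hσ.map_smul, hC, hH.bar_std_simple hσ, invert_T, neg_neg, mul_add,
      mul_smul_comm, mul_one]
    module
  suffices D = 0 from sub_eq_zero.mp this
  refine hH.eq_zero_of_bar_eq_self hσ hσD fun x hx hmax n hn => ?_
  have hxi := hH.isRightDescent_of_mul_simple_eq_smul hDs hx hmax
  have hxs : x * cs.simple i ≠ w := by
    rintro rfl
    rw [cs.isRightDescent_iff_not_isRightDescent_mul, cs.simple_mul_simple_cancel_right] at hw
    exact hw hxi
  have hDx : std.repr D x = std.repr C (x * cs.simple i) - T 1 * std.repr C x := by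
    rw [map_sub, Finsupp.sub_apply, hH.repr_mul_simple, if_pos hxi, map_smul, Finsupp.smul_apply,
      smul_eq_mul]
    ring
  rw [hDx, AddMonoidAlgebra.coeff_sub, Finsupp.sub_apply, coeff_T_mul, hCpos _ hxs n hn,
    zero_sub, neg_eq_zero]
  by_cases hxw : x = w
  · rw [hxw, hCw, ← T_zero, T_apply, if_neg (by omega)]
  · exact hCpos x hxw (n - 1) (by omega)

end IsHeckeStandardBasis

end Hecke

theorem stmt_6_general (cs : CoxeterSystem M W)
    {H : Type*} [Ring H] [Algebra (LaurentPolynomial ℤ) H]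
    (std : Module.Basis W (LaurentPolynomial ℤ) H)
    (hone : std 1 = 1)
    (hmul : ∀ a c : W, cs.length (a * c) = cs.length a + cs.length c →
      std a * std c = std (a * c))
    (hquad : ∀ i : B, std (cs.simple i) * std (cs.simple i) =
      (T (-1) - T 1 : LaurentPolynomial ℤ) • std (cs.simple i) + 1)
    (σ : H →+* H)
    (hσsmul : ∀ (p : LaurentPolynomial ℤ) (a : H), σ (p • a) = invert p • σ a)
    (hσstd : ∀ w : W, σ (std w) * std w⁻¹ = 1)
    (b : W → H) (h : W → W → LaurentPolynomial ℤ)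
    (hself : ∀ w, σ (b w) = b w)
    (hrepr : ∀ w u, std.repr (b w) u = h u w)
    (hdiag : ∀ w, h w w = 1)
    (hsupp : ∀ w u, h u w ≠ 0 → u = w ∨ bruhatLT cs u w)
    (hv : ∀ w u, bruhatLT cs u w → ∀ n : ℤ, n ≤ 0 → (h u w).coeff n = 0)
    (z w : W) (r : B)
    (hdw : cs.IsRightDescent w r) (hdz : ¬ cs.IsRightDescent z r)
    (hμ : (h z w).coeff 1 ≠ 0) :
    w = z * cs.simple r ∧ (h z w).coeff 1 = 1 := by
  have hH : IsHeckeStandardBasis cs std := ⟨hone, hmul, hquad⟩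
  have hσ : IsBarInvolution std σ := ⟨hσsmul, hσstd⟩
  have hpos : ∀ u ≠ w, ∀ n ≤ 0, (h u w).coeff n = 0 := by
    intro u hu n hn
    by_cases h0 : h u w = 0
    · rw [h0]
      rfl
    · exact hv w u ((hsupp w u h0).resolve_left hu) n hn
  have hbw := hH.mul_simple_eq_smul_of_isRightDescent hσ (hself w) (by rw [hrepr, hdiag])
    (fun x hx => by simpa only [hrepr] using hpos x hx) hdw
  have hzs : h (z * cs.simple r) w = T (-1) * h z w := by
    simpa [hH.repr_mul_simple, hdz, hrepr] using congrArg (std.repr · z) hbw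
  have hμ_eq : (h z w).coeff 1 = (h (z * cs.simple r) w).coeff 0 := by
    rw [hzs, coeff_T_mul, zero_sub, neg_neg]
  by_cases hw : z * cs.simple r = w
  · refine ⟨hw.symm, ?_⟩
    rw [hμ_eq, hw, hdiag, ← T_zero, T_apply, if_pos rfl]
  · exact absurd (hμ_eq ▸ hpos _ hw 0 le_rfl) hμ

/-- If `z < w` in Bruhat order and `r` is a right descent of `w` but not of
`z`, then `μ(z,w) ≠ 0` implies `w = z r`, and in that case `μ(z,w) = 1`. Here the Hecke
algebra (standard basis `std`), the bar involution `σ`, the Kazhdan–Lusztig basis `b` and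
the KL polynomials `h` (Soergel's normalization) are specified by their defining
properties, and `μ(z,w)` is the coefficient of `v` in `h z w`. -/
theorem stmt_6 (cs : CoxeterSystem M W)
    {H : Type*} [Ring H] [Algebra (LaurentPolynomial ℤ) H]
    (std : Module.Basis W (LaurentPolynomial ℤ) H)
    (hone : std 1 = 1)
    (hmul : ∀ a c : W, cs.length (a * c) = cs.length a + cs.length c →
      std a * std c = std (a * c))
    (hquad : ∀ i : B, std (cs.simple i) * std (cs.simple i) =
      (T (-1) - T 1 : LaurentPolynomial ℤ) • std (cs.simple i) + 1)
    (σ : H →+* H)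
    (hσinvol : ∀ a, σ (σ a) = a)
    (hσsmul : ∀ (p : LaurentPolynomial ℤ) (a : H), σ (p • a) = invert p • σ a)
    (hσstd : ∀ w : W, σ (std w) * std w⁻¹ = 1)
    (b : W → H) (h : W → W → LaurentPolynomial ℤ)
    (hself : ∀ w, σ (b w) = b w)
    (hrepr : ∀ w u, std.repr (b w) u = h u w)
    (hdiag : ∀ w, h w w = 1)
    (hsupp : ∀ w u, h u w ≠ 0 → u = w ∨ bruhatLT cs u w)
    (hv : ∀ w u, bruhatLT cs u w → ∀ n : ℤ, n ≤ 0 → (h u w).coeff n = 0)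
    (z w : W) (hzw : bruhatLT cs z w) (r : B)
    (hdw : cs.IsRightDescent w r) (hdz : ¬ cs.IsRightDescent z r)
    (hμ : (h z w).coeff 1 ≠ 0) :
    w = z * cs.simple r ∧ (h z w).coeff 1 = 1 :=
  stmt_6_general cs std hone hmul hquad σ hσsmul hσstd b h hself hrepr hdiag hsupp hv z w r hdw hdz
    hμ
end

section
/- Let x, y ∈ S_n be permutations in one-line (string) notation. If x and y are related by an elementary Knuth transformation K_i at position i (i.e. they differ only in positions i−1, i, i+1, where the substrings are related as bca ↔ bac or cab ↔ acb with a < b < c), then exactly one of the simple transpositions s_{i-1}, s_i lies in the right descent set of x, and y equals the right star operation of x with respect to {s_{i-1}, s_i}. -/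
/-!
A Knuth move swaps two adjacent letters of the window `x(p-1) x(p) x(p+1)` and leaves the
third letter, the one of middle value, at an end of the window. A word of three distinct
letters has exactly one descent iff its letter of middle value stands at an end. So `x` and `y`
both lie in `D_R(s_{p-1}, s_p)`, while the other candidate `x s` moves the middle letter into
the centre of the window.
-/

open Equiv

section Descents

variable {α : Type*} [LinearOrder α]

/-- For `a b c = w i0, w i1, w i2` this says `w ∈ D_R(s_{p-1}, s_p)`. -/
def OneDescent (a b c : α) : Prop := Xor (b < a) (c < b)

theorem ne_of_between {a b c : α} (h : b < a ∧ a < c ∨ c < a ∧ a < b) :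
    a ≠ b ∧ a ≠ c ∧ b ≠ c := by
  rcases h with ⟨hba, hac⟩ | ⟨hca, hab⟩
  · exact ⟨hba.ne', hac.ne, (hba.trans hac).ne⟩
  · exact ⟨hab.ne, hca.ne', (hca.trans hab).ne'⟩

theorem oneDescent_of_first_between {a b c : α} (h : b < a ∧ a < c ∨ c < a ∧ a < b) :
    OneDescent a b c ∧ OneDescent a c b ∧ ¬OneDescent b a c := by
  unfold OneDescent Xor
  grind

theorem oneDescent_of_last_between {a b c : α} (h : a < c ∧ c < b ∨ b < c ∧ c < a) :
    OneDescent a b c ∧ OneDescent b a c ∧ ¬OneDescent a c b := by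
  unfold OneDescent Xor
  grind

end Descents

namespace Equiv.Perm

variable {ι : Type*} [DecidableEq ι]

theorem eq_mul_swap_of_apply {x y : Perm ι} {a b : ι} (ha : y a = x b) (hb : y b = x a)
    (hfix : ∀ j, j ≠ a → j ≠ b → y j = x j) : y = x * swap a b := by
  ext j
  by_cases hja : j = a
  · simp [hja, ha]
  by_cases hjb : j = b
  · simp [hjb, hb]
  simp [swap_apply_of_ne_of_ne hja hjb, hfix j hja hjb]

end Equiv.Perm

section KnuthMoves

open Equiv.Perm

variable {ι : Type*} [LinearOrder ι] {x y : Perm ι} {i0 i1 i2 : ι}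

theorem knuth_swap_right (hfix : ∀ j, j ≠ i0 → j ≠ i1 → j ≠ i2 → x j = y j)
    (e0 : y i0 = x i0) (e1 : y i1 = x i2) (e2 : y i2 = x i1)
    (hord : x i1 < x i0 ∧ x i0 < x i2 ∨ x i2 < x i0 ∧ x i0 < x i1) :
    OneDescent (x i0) (x i1) (x i2) ∧ y = x * swap i1 i2 ∧
      OneDescent (y i0) (y i1) (y i2) ∧
      ¬OneDescent ((x * swap i0 i1) i0) ((x * swap i0 i1) i1) ((x * swap i0 i1) i2) := by
  obtain ⟨-, h02, h12⟩ := ne_of_between hord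
  obtain ⟨hx, hy, hx01⟩ := oneDescent_of_first_between hord
  refine ⟨hx, ?_, by rwa [e0, e1, e2], ?_⟩
  · refine eq_mul_swap_of_apply e1 e2 fun j hj1 hj2 => ?_
    by_cases hj0 : j = i0
    · rw [hj0, e0]
    · exact (hfix j hj0 hj1 hj2).symm
  · simpa [swap_apply_of_ne_of_ne (ne_of_apply_ne x h02).symm (ne_of_apply_ne x h12).symm] using hx01

theorem knuth_swap_left (hfix : ∀ j, j ≠ i0 → j ≠ i1 → j ≠ i2 → x j = y j)
    (e2 : y i2 = x i2) (e0 : y i0 = x i1) (e1 : y i1 = x i0)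
    (hord : x i0 < x i2 ∧ x i2 < x i1 ∨ x i1 < x i2 ∧ x i2 < x i0) :
    OneDescent (x i0) (x i1) (x i2) ∧ y = x * swap i0 i1 ∧
      OneDescent (y i0) (y i1) (y i2) ∧
      ¬OneDescent ((x * swap i1 i2) i0) ((x * swap i1 i2) i1) ((x * swap i1 i2) i2) := by
  obtain ⟨h20, -, h01⟩ := ne_of_between (a := x i2) (by tauto)
  obtain ⟨hx, hy, hx12⟩ := oneDescent_of_last_between hord
  refine ⟨hx, ?_, by rwa [e0, e1, e2], ?_⟩
  · refine eq_mul_swap_of_apply e0 e1 fun j hj0 hj1 => ?_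
    by_cases hj2 : j = i2
    · rw [hj2, e2]
    · exact (hfix j hj0 hj1 hj2).symm
  · simpa [swap_apply_of_ne_of_ne (ne_of_apply_ne x h01) (ne_of_apply_ne x h20).symm] using hx12

end KnuthMoves

theorem stmt_10_general {n : ℕ} (x y : Equiv.Perm (Fin n))
    (i0 : Fin n) (i1 : Fin n) (i2 : Fin n)
    -- x and y agree outside positions p-1, p, p+1
    (hfix : ∀ j : Fin n, j ≠ i0 → j ≠ i1 → j ≠ i2 → x j = y j)
    -- and differ by an elementary Knuth transformation: bca ↔ bac or cab ↔ acb
    (hknuth :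
      (y i0 = x i0 ∧ y i1 = x i2 ∧ y i2 = x i1 ∧
        (x i1 < x i0 ∧ x i0 < x i2 ∨ x i2 < x i0 ∧ x i0 < x i1)) ∨
      (y i2 = x i2 ∧ y i0 = x i1 ∧ y i1 = x i0 ∧
        (x i0 < x i2 ∧ x i2 < x i1 ∨ x i1 < x i2 ∧ x i2 < x i0))) :
    -- exactly one of s_{p-1}, s_p is a right descent of x
    Xor' (x i1 < x i0) (x i2 < x i1) ∧
    -- y is obtained from x by right multiplication by s_{p-1} or s_p
    (y = x * Equiv.swap i0 i1 ∨ y = x * Equiv.swap i1 i2) ∧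
    -- y lies in D_R(s_{p-1}, s_p)
    Xor' (y i1 < y i0) (y i2 < y i1) ∧
    -- and y is the unique such element, i.e. the right star operation applied to x
    (∀ z : Equiv.Perm (Fin n),
      (z = x * Equiv.swap i0 i1 ∨ z = x * Equiv.swap i1 i2) →
      Xor' (z i1 < z i0) (z i2 < z i1) → z = y) := by
  rcases hknuth with ⟨e0, e1, e2, hord⟩ | ⟨e2, e0, e1, hord⟩
  · obtain ⟨hx, hy, hy', hno⟩ := knuth_swap_right hfix e0 e1 e2 hord
    refine ⟨hx, .inr hy, hy', ?_⟩
    rintro z (rfl | rfl) hz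
    exacts [absurd hz hno, hy.symm]
  · obtain ⟨hx, hy, hy', hno⟩ := knuth_swap_left hfix e2 e0 e1 hord
    refine ⟨hx, .inl hy, hy', ?_⟩
    rintro z (rfl | rfl) hz
    exacts [hy.symm, absurd hz hno]

/-- If `x, y ∈ S_n` are related by an elementary Knuth transformation at
position `p` (1-indexed middle position, `1 ≤ p`, `p + 1 < n`, acting on positions
`p-1, p, p+1` in 0-indexed one-line notation), then exactly one of `s_{p-1}, s_p` is a
right descent of `x`, and `y` is the right star operation of `x` with respect to
`{s_{p-1}, s_p}`: the unique element of `{x s_{p-1}, x s_p}` having exactly one of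
`s_{p-1}, s_p` as a right descent. -/
theorem stmt_10 {n : ℕ} (x y : Equiv.Perm (Fin n)) (p : ℕ) (h1 : 1 ≤ p) (h2 : p + 1 < n)
    (i0 : Fin n) (i1 : Fin n) (i2 : Fin n)
    (hi0 : (i0 : ℕ) = p - 1) (hi1 : (i1 : ℕ) = p) (hi2 : (i2 : ℕ) = p + 1)
    -- x and y agree outside positions p-1, p, p+1
    (hfix : ∀ j : Fin n, j ≠ i0 → j ≠ i1 → j ≠ i2 → x j = y j)
    -- and differ by an elementary Knuth transformation: bca ↔ bac or cab ↔ acb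
    (hknuth :
      (y i0 = x i0 ∧ y i1 = x i2 ∧ y i2 = x i1 ∧
        (x i1 < x i0 ∧ x i0 < x i2 ∨ x i2 < x i0 ∧ x i0 < x i1)) ∨
      (y i2 = x i2 ∧ y i0 = x i1 ∧ y i1 = x i0 ∧
        (x i0 < x i2 ∧ x i2 < x i1 ∨ x i1 < x i2 ∧ x i2 < x i0))) :
    -- exactly one of s_{p-1}, s_p is a right descent of x
    Xor' (x i1 < x i0) (x i2 < x i1) ∧
    -- y is obtained from x by right multiplication by s_{p-1} or s_p
    (y = x * Equiv.swap i0 i1 ∨ y = x * Equiv.swap i1 i2) ∧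
    -- y lies in D_R(s_{p-1}, s_p)
    Xor' (y i1 < y i0) (y i2 < y i1) ∧
    -- and y is the unique such element, i.e. the right star operation applied to x
    (∀ z : Equiv.Perm (Fin n),
      (z = x * Equiv.swap i0 i1 ∨ z = x * Equiv.swap i1 i2) →
      Xor' (z i1 < z i0) (z i2 < z i1) → z = y) :=
  stmt_10_general x y i0 i1 i2 hfix hknuth
end

section
/- For permutations x, y ∈ S_n: x and y are Knuth equivalent (related by a finite sequence of elementary Knuth transformations) if and only if P(x) = P(y), where P denotes the Robinson–Schensted insertion tableau. -/
/-!
Row insertion of a word `w` into a row `r` yields a new row and a word of bumped letters, and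
inserting `w` into a tableau means inserting it into the first row and then inserting the bumped
word into the remaining rows. For a single row one checks that an elementary Knuth move of `w`
leaves the new row unchanged and changes the bumped word by at most an elementary Knuth move;
induction over the rows then shows that Knuth equivalent words have the same insertion tableau.
Conversely, a row followed by a letter is Knuth equivalent to the bumped letter followed by the
new row, so every word is Knuth equivalent to the reading word of its insertion tableau, and two
words with the same tableau are Knuth equivalent. One-line notation turns Knuth moves of
permutations into Knuth moves of words with distinct letters.
-/

/-- Robinson–Schensted row insertion into a single row: replace the leftmost entry
strictly greater than `k` (returning the bumped entry), or append `k` at the end. -/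
def rowInsert (r : List ℕ) (k : ℕ) : List ℕ × Option ℕ :=
  match r.findIdx? (fun x => decide (k < x)) with
  | none => (r ++ [k], none)
  | some j => (r.set j k, r[j]?)

/-- Robinson–Schensted insertion of `k` into a tableau (list of rows). -/
def insertTab : List (List ℕ) → ℕ → List (List ℕ)
  | [], k => [[k]]
  | r :: rest, k =>
    match rowInsert r k with
    | (r', none) => r' :: rest
    | (r', some m) => r' :: insertTab rest m

/-- The insertion (`P`-) tableau of a word. -/
def Ptab (l : List ℕ) : List (List ℕ) := l.foldl insertTab []

/-- Add a box labelled `step` at the end of row `j` of `Q`. -/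
def addBox (Q : List (List ℕ)) (j step : ℕ) : List (List ℕ) :=
  if j < Q.length then Q.set j ((Q.getD j []) ++ [step]) else Q ++ [[step]]

/-- The index of the row in which `P'` grew relative to `P`. -/
def growRow (P P' : List (List ℕ)) : ℕ :=
  (List.range P'.length).findIdx (fun j => decide ((P.getD j []).length < (P'.getD j []).length))

/-- The recording (`Q`-) tableau of a word. -/
def Qtab (l : List ℕ) : List (List ℕ) :=
  ((l.zipIdx.map Prod.swap).foldl (fun pq s =>
    let P' := insertTab pq.1 s.2
    (P', addBox pq.2 (growRow pq.1 P') (s.1 + 1)))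
    (([] : List (List ℕ)), ([] : List (List ℕ)))).2

/-- The (1-based) one-line notation of a permutation of `Fin n`. -/
def permWord {n : ℕ} (w : Equiv.Perm (Fin n)) : List ℕ :=
  (List.finRange n).map (fun i => (w i : ℕ) + 1)

/-- An elementary Knuth transformation relating `x` and `y`: at some (0-indexed) middle
position `p` with `1 ≤ p` and `p + 1 < n`, the one-line notations agree outside positions
`p-1, p, p+1`, and on those positions are related as `bca ↔ bac` or `cab ↔ acb`
with `a < b < c`. -/
def KnuthMove {n : ℕ} (x y : Equiv.Perm (Fin n)) : Prop :=
  ∃ p : ℕ, ∃ _ : 1 ≤ p, ∃ h2 : p + 1 < n,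
    let i0 : Fin n := ⟨p - 1, by omega⟩
    let i1 : Fin n := ⟨p, by omega⟩
    let i2 : Fin n := ⟨p + 1, h2⟩
    (∀ j : Fin n, j ≠ i0 → j ≠ i1 → j ≠ i2 → x j = y j) ∧
    ((y i0 = x i0 ∧ y i1 = x i2 ∧ y i2 = x i1 ∧
        (x i1 < x i0 ∧ x i0 < x i2 ∨ x i2 < x i0 ∧ x i0 < x i1)) ∨
     (y i2 = x i2 ∧ y i0 = x i1 ∧ y i1 = x i0 ∧
        (x i0 < x i2 ∧ x i2 < x i1 ∨ x i1 < x i2 ∧ x i2 < x i0)))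

inductive KnuthStep : List ℕ → List ℕ → Prop
  | bac_bca (u v : List ℕ) {a b c : ℕ} :
      a < b → b < c → KnuthStep (u ++ [b, a, c] ++ v) (u ++ [b, c, a] ++ v)
  | acb_cab (u v : List ℕ) {a b c : ℕ} :
      a < b → b < c → KnuthStep (u ++ [a, c, b] ++ v) (u ++ [c, a, b] ++ v)

abbrev KnuthEquiv : List ℕ → List ℕ → Prop := Relation.EqvGen KnuthStep

namespace KnuthStep

variable {w w' : List ℕ}

theorem perm (h : KnuthStep w w') : w.Perm w' := by
  cases h with
  | bac_bca u v => exact (((List.Perm.swap _ _ []).cons _).append_left u).append_right v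
  | acb_cab u v => exact ((List.Perm.swap _ _ _).append_left u).append_right v

theorem append (x y : List ℕ) (h : KnuthStep w w') :
    KnuthStep (x ++ w ++ y) (x ++ w' ++ y) := by
  cases h with
  | bac_bca u v hab hbc => simpa using bac_bca (x ++ u) (v ++ y) hab hbc
  | acb_cab u v hab hbc => simpa using acb_cab (x ++ u) (v ++ y) hab hbc

end KnuthStep

namespace KnuthEquiv

variable {w w' : List ℕ}

theorem perm (h : KnuthEquiv w w') : w.Perm w' := by
  induction h with
  | rel _ _ h => exact h.perm
  | refl => rfl
  | symm _ _ _ ih => exact ih.symm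
  | trans _ _ _ _ _ ih₁ ih₂ => exact ih₁.trans ih₂

theorem append (x y : List ℕ) (h : KnuthEquiv w w') :
    KnuthEquiv (x ++ w ++ y) (x ++ w' ++ y) := by
  induction h with
  | rel _ _ h => exact .rel _ _ (h.append x y)
  | refl => exact .refl _
  | symm _ _ _ ih => exact .symm _ _ ih
  | trans _ _ _ _ _ ih₁ ih₂ => exact .trans _ _ _ ih₁ ih₂

theorem cons (x : ℕ) (h : KnuthEquiv w w') : KnuthEquiv (x :: w) (x :: w') := by
  simpa using h.append [x] []

end KnuthEquiv

section RowInsertion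

variable {r s t w : List ℕ} {k : ℕ}

theorem rowInsert_append (hs : ∀ x ∈ s, x < k) (ht : ∀ x ∈ t, k < x) :
    rowInsert (s ++ t) k = (s ++ k :: t.tail, t.head?) := by
  have hfind : (s ++ t).findIdx? (fun x => decide (k < x)) =
      (t.findIdx? (fun x => decide (k < x))).map (· + s.length) := by
    rw [List.findIdx?_append,
      List.findIdx?_eq_none_iff.mpr (by simpa using fun x hx => (hs x hx).le)]
    simp
  cases t with
  | nil => simp only [List.append_nil] at hfind; simp [rowInsert, hfind]
  | cons m t => simp [rowInsert, hfind, List.findIdx?_cons, ht m (by simp)]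

theorem exists_append_of_pairwise (hr : r.Pairwise (· < ·)) (hk : k ∉ r) :
    ∃ s t, r = s ++ t ∧ (∀ x ∈ s, x < k) ∧ ∀ x ∈ t, k < x := by
  induction r with
  | nil => exact ⟨[], [], rfl, by simp, by simp⟩
  | cons x r ih =>
    rw [List.pairwise_cons] at hr
    rw [List.mem_cons, not_or] at hk
    rcases lt_or_gt_of_ne hk.1 with hkx | hxk
    · exact ⟨[], x :: r, rfl, by simp, by simpa [hkx] using fun y hy => hkx.trans (hr.1 y hy)⟩
    · obtain ⟨s, t, rfl, hs, ht⟩ := ih hr.2 hk.2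
      exact ⟨x :: s, t, rfl, by simpa [hxk] using hs, ht⟩

theorem knuthEquiv_cons_append_singleton {p : ℕ} (ht : (p :: t).Pairwise (· < ·)) (hkp : k < p) :
    KnuthEquiv (p :: t ++ [k]) (p :: k :: t) := by
  induction t generalizing p with
  | nil => exact .refl _
  | cons q t ih =>
    obtain ⟨hpq, ht⟩ := List.pairwise_cons.mp ht
    have hmove : KnuthStep [p, k, q] [p, q, k] := by
      simpa using KnuthStep.bac_bca [] [] hkp (hpq q (by simp))
    exact .trans _ _ _ ((ih ht (hkp.trans (hpq q (by simp)))).cons p)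
      (.symm _ _ (.rel _ _ (by simpa using hmove.append [] t)))

theorem knuthEquiv_append_cons {m y : ℕ} (hs : s.Pairwise (· < ·)) (hsy : ∀ x ∈ s, x < y)
    (hym : y < m) : KnuthEquiv (s ++ m :: y :: t) (m :: (s ++ y :: t)) := by
  induction s with
  | nil => exact .refl _
  | cons x s ih =>
    obtain ⟨hxs, hs⟩ := List.pairwise_cons.mp hs
    have hx : x < y := hsy x (by simp)
    have hmove : KnuthStep (x :: m :: (s ++ y :: t)) (m :: x :: (s ++ y :: t)) := by
      cases s with
      | nil => simpa using KnuthStep.acb_cab [] t hx hym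
      | cons q s =>
        have hq : q < y := hsy q (by simp)
        simpa using KnuthStep.acb_cab [] (s ++ y :: t) (hxs q (by simp)) (hq.trans hym)
    exact .trans _ _ _ ((ih hs fun z hz => hsy z (by simp [hz])).cons x) (.rel _ _ hmove)

theorem knuthEquiv_rowInsert (hr : r.Pairwise (· < ·)) (hk : k ∉ r) :
    KnuthEquiv (r ++ [k]) ((rowInsert r k).2.toList ++ (rowInsert r k).1) := by
  obtain ⟨s, t, rfl, hs, ht⟩ := exists_append_of_pairwise hr hk
  rw [rowInsert_append hs ht]
  cases t with
  | nil => simpa using .refl _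
  | cons m t =>
    rw [List.pairwise_append] at hr
    have hkm := ht m (by simp)
    refine .trans _ _ _ ?_ (by simpa using knuthEquiv_append_cons hr.1 hs hkm)
    simpa using (knuthEquiv_cons_append_singleton hr.2.1 hkm).append s []

theorem rowInsert_fst_pairwise (hr : r.Pairwise (· < ·)) (hk : k ∉ r) :
    (rowInsert r k).1.Pairwise (· < ·) := by
  obtain ⟨s, t, rfl, hs, ht⟩ := exists_append_of_pairwise hr hk
  rw [rowInsert_append hs ht]
  rw [List.pairwise_append] at hr ⊢
  have htail : ∀ x ∈ t.tail, x ∈ t := fun x hx => List.mem_of_mem_tail hx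
  refine ⟨hr.1, List.pairwise_cons.mpr
    ⟨fun x hx => ht x (htail x hx), hr.2.1.sublist (List.tail_sublist t)⟩, ?_⟩
  simp only [List.mem_cons]
  rintro x hx y (rfl | hy)
  exacts [hs x hx, hr.2.2 x hx y (htail y hy)]

theorem rowInsert_fst_append_nodup (hr : r.Pairwise (· < ·)) (h : (r ++ k :: w).Nodup) :
    ((rowInsert r k).1 ++ w).Nodup := by
  have hk : k ∉ r := fun hk => List.disjoint_of_nodup_append h hk List.mem_cons_self
  have hperm : ((rowInsert r k).2.toList ++ ((rowInsert r k).1 ++ w)).Perm (r ++ k :: w) := by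
    simpa using (knuthEquiv_rowInsert hr hk).perm.symm.append_right w
  exact (hperm.nodup_iff.mpr h).of_append_right

end RowInsertion

def rowInsertWord : List ℕ → List ℕ → List ℕ × List ℕ
  | r, [] => (r, [])
  | r, k :: w =>
    let q := rowInsertWord (rowInsert r k).1 w
    (q.1, (rowInsert r k).2.toList ++ q.2)

def RowKnuthEquiv (r w w' : List ℕ) : Prop :=
  (rowInsertWord r w).1 = (rowInsertWord r w').1 ∧
    KnuthEquiv (rowInsertWord r w).2 (rowInsertWord r w').2

section RowInsertWord

variable {r w : List ℕ}

theorem rowInsertWord_cons (r w : List ℕ) (k : ℕ) :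
    rowInsertWord r (k :: w) =
      ((rowInsertWord (rowInsert r k).1 w).1,
        (rowInsert r k).2.toList ++ (rowInsertWord (rowInsert r k).1 w).2) := rfl

theorem rowInsertWord_append (r w₁ w₂ : List ℕ) :
    rowInsertWord r (w₁ ++ w₂) =
      ((rowInsertWord (rowInsertWord r w₁).1 w₂).1,
        (rowInsertWord r w₁).2 ++ (rowInsertWord (rowInsertWord r w₁).1 w₂).2) := by
  induction w₁ generalizing r with
  | nil => rfl
  | cons k w ih => simp [rowInsertWord, ih]

theorem length_rowInsertWord_snd_le (r w : List ℕ) :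
    (rowInsertWord r w).2.length ≤ w.length := by
  induction w generalizing r with
  | nil => rfl
  | cons k w ih =>
    have hrest := ih (rowInsert r k).1
    have hbump : (rowInsert r k).2.toList.length ≤ 1 := by cases (rowInsert r k).2 <;> simp
    simp only [rowInsertWord, List.length_append, List.length_cons]
    omega

theorem rowInsertWord_fst_pairwise (hr : r.Pairwise (· < ·)) (h : (r ++ w).Nodup) :
    (rowInsertWord r w).1.Pairwise (· < ·) := by
  induction w generalizing r with
  | nil => exact hr
  | cons k w ih =>
    have hk : k ∉ r := fun hk => List.disjoint_of_nodup_append h hk List.mem_cons_self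
    exact ih (rowInsert_fst_pairwise hr hk) (rowInsert_fst_append_nodup hr h)

theorem knuthEquiv_rowInsertWord (hr : r.Pairwise (· < ·)) (h : (r ++ w).Nodup) :
    KnuthEquiv (r ++ w) ((rowInsertWord r w).2 ++ (rowInsertWord r w).1) := by
  induction w generalizing r with
  | nil => simpa using .refl _
  | cons k w ih =>
    have hk : k ∉ r := fun hk => List.disjoint_of_nodup_append h hk List.mem_cons_self
    have hrow := (knuthEquiv_rowInsert hr hk).append [] w
    have hrest := (ih (rowInsert_fst_pairwise hr hk) (rowInsert_fst_append_nodup hr h)).append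
      (rowInsert r k).2.toList []
    simp only [List.nil_append, List.append_nil, List.append_assoc, List.singleton_append]
      at hrow hrest
    simpa [rowInsertWord] using hrow.trans _ _ _ hrest

theorem nodup_append_rowInsertWord_snd {L : List ℕ} (hr : r.Pairwise (· < ·))
    (h : (L ++ r ++ w).Nodup) : (L ++ (rowInsertWord r w).2).Nodup := by
  have hperm := (knuthEquiv_rowInsertWord hr (w := w) (h.sublist (by simp))).perm.append_left L
  rw [← List.append_assoc, ← List.append_assoc] at hperm
  exact (hperm.nodup_iff.mp h).sublist (by simp)

theorem rowInsertWord_pair_comm {s m u : List ℕ} {x y z : ℕ} (hs : ∀ a ∈ s, a < x)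
    (hzm : ∀ a ∈ z :: m, x < a ∧ a < y) (hu : ∀ a ∈ u, y < a) :
    rowInsertWord (s ++ z :: m ++ u) [x, y] =
        (s ++ x :: m ++ y :: u.tail, z :: u.head?.toList) ∧
      rowInsertWord (s ++ z :: m ++ u) [y, x] =
        (s ++ x :: m ++ y :: u.tail, u.head?.toList ++ [z]) := by
  have hxy : x < y := (hzm z (by simp)).1.trans (hzm z (by simp)).2
  have hut : ∀ a ∈ u.tail, y < a := fun a ha => hu a (List.mem_of_mem_tail ha)
  have h₁ : rowInsert (s ++ (z :: m ++ u)) x = (s ++ x :: (m ++ u), some z) :=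
    rowInsert_append hs (by grind)
  have h₂ : rowInsert ((s ++ x :: m) ++ u) y = (s ++ x :: m ++ y :: u.tail, u.head?) :=
    rowInsert_append (by grind) hu
  have h₃ : rowInsert ((s ++ z :: m) ++ u) y = (s ++ z :: m ++ y :: u.tail, u.head?) :=
    rowInsert_append (by grind) hu
  have h₄ : rowInsert (s ++ (z :: m ++ y :: u.tail)) x =
      (s ++ x :: (m ++ y :: u.tail), some z) :=
    rowInsert_append hs (by grind)
  simp_all [rowInsertWord]

variable {a b c : ℕ}

/- After `b` is inserted, the row has an entry between `a` and `c`, so inserting `a` and `c`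
commutes. -/
theorem rowKnuthEquiv_bac_bca (hr : r.Pairwise (· < ·)) (hab : a < b) (hbc : b < c)
    (ha : a ∉ r) (hb : b ∉ r) (hc : c ∉ r) : RowKnuthEquiv r [b, a, c] [b, c, a] := by
  obtain ⟨p, q, rfl, hp, hq⟩ := exists_append_of_pairwise hr hb
  rw [List.pairwise_append] at hr
  obtain ⟨s, t, rfl, hs, ht⟩ := exists_append_of_pairwise hr.1 (k := a) (by simp_all)
  obtain ⟨u₁, u₂, hu, hu₁, hu₂⟩ := exists_append_of_pairwise
    (hr.2.1.sublist (List.tail_sublist q))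
    fun h => hc (List.mem_append_right _ (List.mem_of_mem_tail h))
  have hu₁b : ∀ x ∈ u₁, b < x := fun x hx => hq x (List.mem_of_mem_tail (by simp [hu, hx]))
  obtain ⟨z, m, hzm⟩ : ∃ z m, t ++ b :: u₁ = z :: m := by cases t <;> simp
  have hzb : z ≤ b := by
    cases t with
    | nil => simp at hzm; omega
    | cons d t => simp at hzm; exact hzm.1 ▸ (hp d (by simp)).le
  have hins : rowInsert (s ++ t ++ q) b = (s ++ z :: m ++ u₂, q.head?) := by
    rw [rowInsert_append hp hq, ← hzm, hu]; simp
  obtain ⟨hac, hca⟩ := rowInsertWord_pair_comm (m := m) hs (y := c)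
    (by rw [← hzm]; grind) hu₂
  simp only [RowKnuthEquiv, rowInsertWord_cons _ [a, c], rowInsertWord_cons _ [c, a], hins, hac,
    hca, true_and]
  rcases q with _ | ⟨β, q⟩
  · obtain rfl : u₂ = [] := by simp_all
    exact .refl _
  rcases u₂ with _ | ⟨γ, u₂⟩
  · exact .refl _
  have hβγ : β < γ := List.rel_of_pairwise_cons hr.2.1 (by simp [show q = u₁ ++ γ :: u₂ from hu])
  simpa using Relation.EqvGen.rel _ _
    (KnuthStep.bac_bca [] [] (hzb.trans_lt (hq β (by simp))) hβγ)

theorem rowKnuthEquiv_acb_cab_of_no_between {s v : List ℕ} (hab : a < b) (hbc : b < c)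
    (hs : ∀ x ∈ s, x < a) (hv : ∀ x ∈ v, c < x) (hv' : v.Pairwise (· < ·)) :
    RowKnuthEquiv (s ++ v) [a, c, b] [c, a, b] := by
  have hvt : ∀ x ∈ v.tail, c < x := fun x hx => hv x (List.mem_of_mem_tail hx)
  have hvtt : ∀ x ∈ v.tail.tail, c < x := fun x hx => hvt x (List.mem_of_mem_tail hx)
  have hac : rowInsertWord (s ++ v) [a, c] =
      (s ++ [a] ++ c :: v.tail.tail, v.head?.toList ++ v.tail.head?.toList) := by
    have h₁ : rowInsert (s ++ v) a = (s ++ a :: v.tail, v.head?) :=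
      rowInsert_append hs (by grind)
    have h₂ : rowInsert (s ++ [a] ++ v.tail) c = (s ++ [a] ++ c :: v.tail.tail, v.tail.head?) :=
      rowInsert_append (by grind) hvt
    simp_all [rowInsertWord]
  have hca : rowInsertWord (s ++ v) [c, a] = (s ++ a :: v.tail, v.head?.toList ++ [c]) := by
    have h₁ : rowInsert (s ++ v) c = (s ++ c :: v.tail, v.head?) :=
      rowInsert_append (by grind) hv
    have h₂ : rowInsert (s ++ c :: v.tail) a = (s ++ a :: v.tail, some c) :=
      rowInsert_append hs (by grind)
    simp_all [rowInsertWord]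
  have hb₁ : rowInsert (s ++ a :: c :: v.tail.tail) b = (s ++ a :: b :: v.tail.tail, some c) := by
    simpa using rowInsert_append (s := s ++ [a]) (t := c :: v.tail.tail) (by grind) (by grind)
  have hb₂ : rowInsert (s ++ a :: v.tail) b = (s ++ a :: b :: v.tail.tail, v.tail.head?) := by
    simpa using rowInsert_append (s := s ++ [a]) (t := v.tail) (by grind) (by grind)
  rw [RowKnuthEquiv, show [a, c, b] = [a, c] ++ [b] from rfl,
    show [c, a, b] = [c, a] ++ [b] from rfl, rowInsertWord_append, rowInsertWord_append, hac, hca]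
  simp only [hb₁, hb₂, rowInsertWord, List.append_assoc, List.singleton_append, true_and,
    List.append_nil]
  rcases v with _ | ⟨α, _ | ⟨δ, v⟩⟩
  · exact .refl _
  · exact .refl _
  · have hαδ : α < δ := List.rel_of_pairwise_cons hv' (by simp)
    simpa using Relation.EqvGen.symm _ _
      (.rel _ _ (KnuthStep.bac_bca [] [] (hv α (by simp)) hαδ))

/- Inserting `a` and `c` commutes because `z` lies between them. -/
theorem rowKnuthEquiv_acb_cab_of_between {s m v : List ℕ} {z : ℕ} (hab : a < b) (hbc : b < c)
    (hs : ∀ x ∈ s, x < a) (hzm : ∀ x ∈ z :: m, a < x ∧ x < c) (hzm' : (z :: m).Pairwise (· < ·))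
    (hb : b ∉ m) (hv : ∀ x ∈ v, c < x) :
    RowKnuthEquiv (s ++ z :: m ++ v) [a, c, b] [c, a, b] := by
  obtain ⟨hac, hca⟩ := rowInsertWord_pair_comm hs hzm hv
  obtain ⟨m₁, m₂, rfl, hm₁, hm₂⟩ := exists_append_of_pairwise (List.pairwise_cons.mp hzm').2 hb
  obtain ⟨β, w, hβw⟩ : ∃ β w, m₂ ++ c :: v.tail = β :: w := by cases m₂ <;> simp
  have hzβ : z < β ∧ β ≤ c := by
    cases m₂ with
    | nil => simp at hβw; exact ⟨hβw.1 ▸ (hzm z (by simp)).2, hβw.1.ge⟩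
    | cons d m₂ =>
      simp only [List.cons_append, List.cons.injEq] at hβw
      exact ⟨hβw.1 ▸ List.rel_of_pairwise_cons hzm' (by simp), hβw.1 ▸ (hzm d (by simp)).2.le⟩
  have hvt : ∀ x ∈ v.tail, c < x := fun x hx => hv x (List.mem_of_mem_tail hx)
  have hb : rowInsert (s ++ a :: m₁ ++ (m₂ ++ c :: v.tail)) b =
      (s ++ a :: m₁ ++ b :: w, some β) := by
    rw [hβw]; exact rowInsert_append (by grind) (by rw [← hβw]; grind)
  rw [RowKnuthEquiv, show [a, c, b] = [a, c] ++ [b] from rfl,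
    show [c, a, b] = [c, a] ++ [b] from rfl, rowInsertWord_append, rowInsertWord_append, hac, hca]
  simp only [List.append_assoc, List.cons_append] at hb ⊢
  simp only [rowInsertWord, hb, true_and]
  rcases v with _ | ⟨γ, v⟩
  · simpa using .refl _
  · simpa using Relation.EqvGen.rel _ _
      (KnuthStep.acb_cab [] [] hzβ.1 (hzβ.2.trans_lt (hv γ (by simp))))

theorem rowKnuthEquiv_acb_cab (hr : r.Pairwise (· < ·)) (hab : a < b) (hbc : b < c)
    (ha : a ∉ r) (hb : b ∉ r) (hc : c ∉ r) : RowKnuthEquiv r [a, c, b] [c, a, b] := by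
  obtain ⟨s, q, rfl, hs, hq⟩ := exists_append_of_pairwise hr ha
  rw [List.pairwise_append] at hr
  obtain ⟨m, v, rfl, hm, hv⟩ := exists_append_of_pairwise hr.2.1 (k := c) (by simp_all)
  rcases m with _ | ⟨z, m⟩
  · rw [List.nil_append] at hr ⊢
    exact rowKnuthEquiv_acb_cab_of_no_between hab hbc hs hv hr.2.1
  · rw [← List.append_assoc]
    exact rowKnuthEquiv_acb_cab_of_between hab hbc hs
      (fun x hx => ⟨hq x (List.mem_append_left _ hx), hm x hx⟩)
      (hr.2.1.sublist (List.sublist_append_left _ _)) (by simp_all) hv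

theorem rowKnuthEquiv_append {u m m' v : List ℕ} (h : RowKnuthEquiv (rowInsertWord r u).1 m m') :
    RowKnuthEquiv r (u ++ m ++ v) (u ++ m' ++ v) := by
  obtain ⟨hrow, hB⟩ := h
  simp only [RowKnuthEquiv, rowInsertWord_append, hrow, true_and]
  exact hB.append _ _

theorem not_mem_rowInsertWord_fst {u m : List ℕ} {x : ℕ} (hr : r.Pairwise (· < ·))
    (h : (r ++ u ++ m).Nodup) (hx : x ∈ m) : x ∉ (rowInsertWord r u).1 := fun hx₁ => by
  have hru := h.sublist (List.sublist_append_left _ _)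
  exact List.disjoint_of_nodup_append h
    ((knuthEquiv_rowInsertWord hr hru).perm.mem_iff.mpr (by simp [hx₁])) hx

theorem rowKnuthEquiv_of_knuthStep {w' : List ℕ} (hr : r.Pairwise (· < ·))
    (h : (r ++ w).Nodup) (hw : KnuthStep w w') : RowKnuthEquiv r w w' := by
  have hr₁ {u : List ℕ} (hu : (r ++ u).Nodup) := rowInsertWord_fst_pairwise hr hu
  cases hw with
  | @bac_bca u v a b c hab hbc =>
    have hrum : (r ++ u ++ [b, a, c]).Nodup := h.sublist (by simp)
    have hnot (x : ℕ) (hx : x ∈ [b, a, c]) := not_mem_rowInsertWord_fst hr hrum hx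
    exact rowKnuthEquiv_append <| rowKnuthEquiv_bac_bca (hr₁ (hrum.sublist (by simp))) hab hbc
      (hnot a (by simp)) (hnot b (by simp)) (hnot c (by simp))
  | @acb_cab u v a b c hab hbc =>
    have hrum : (r ++ u ++ [a, c, b]).Nodup := h.sublist (by simp)
    have hnot (x : ℕ) (hx : x ∈ [a, c, b]) := not_mem_rowInsertWord_fst hr hrum hx
    exact rowKnuthEquiv_append <| rowKnuthEquiv_acb_cab (hr₁ (hrum.sublist (by simp))) hab hbc
      (hnot a (by simp)) (hnot b (by simp)) (hnot c (by simp))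

theorem rowKnuthEquiv_of_knuthEquiv {w' : List ℕ} (hr : r.Pairwise (· < ·))
    (h : (r ++ w).Nodup) (hw : KnuthEquiv w w') : RowKnuthEquiv r w w' := by
  induction hw with
  | rel _ _ hw => exact rowKnuthEquiv_of_knuthStep hr h hw
  | refl => exact ⟨rfl, .refl _⟩
  | symm _ _ hw ih =>
    obtain ⟨hrow, hB⟩ := ih (((KnuthEquiv.perm hw).append_left r).nodup_iff.mpr h)
    exact ⟨hrow.symm, .symm _ _ hB⟩
  | trans _ _ _ h₁₂ _ ih₁₂ ih₂₃ =>
    obtain ⟨hrow₁, hB₁⟩ := ih₁₂ h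
    obtain ⟨hrow₂, hB₂⟩ := ih₂₃ (((KnuthEquiv.perm h₁₂).append_left r).nodup_iff.mp h)
    exact ⟨hrow₁.trans hrow₂, .trans _ _ _ hB₁ hB₂⟩

end RowInsertWord

def insertWord (T : List (List ℕ)) (w : List ℕ) : List (List ℕ) := w.foldl insertTab T

def readingWord (T : List (List ℕ)) : List ℕ := T.reverse.flatten

theorem Ptab_eq_insertWord (w : List ℕ) : Ptab w = insertWord [] w := rfl

@[simp]
theorem readingWord_nil : readingWord [] = [] := rfl

theorem readingWord_cons (r : List ℕ) (T : List (List ℕ)) :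
    readingWord (r :: T) = readingWord T ++ r := by
  simp [readingWord]

theorem insertTab_cons (r : List ℕ) (T : List (List ℕ)) (k : ℕ) :
    insertTab (r :: T) k = (rowInsert r k).1 :: insertWord T (rowInsert r k).2.toList := by
  rw [insertTab]
  rcases rowInsert r k with ⟨r', _ | m⟩ <;> rfl

theorem insertWord_cons (r : List ℕ) (T : List (List ℕ)) (w : List ℕ) :
    insertWord (r :: T) w = (rowInsertWord r w).1 :: insertWord T (rowInsertWord r w).2 := by
  induction w generalizing r T with
  | nil => rfl
  | cons k w ih =>
    simp only [insertWord, List.foldl_cons] at ih ⊢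
    rw [insertTab_cons, ih, rowInsertWord_cons, insertWord, ← List.foldl_append]

theorem insertWord_nil_cons (k : ℕ) (w : List ℕ) :
    insertWord [] (k :: w) = insertWord [[]] (k :: w) := by
  simp [insertWord, insertTab, rowInsert]

theorem length_rowInsertWord_nil_cons_snd_le (k : ℕ) (w : List ℕ) :
    (rowInsertWord [] (k :: w)).2.length ≤ w.length := by
  simpa [rowInsertWord_cons, rowInsert] using length_rowInsertWord_snd_le [k] w

/- The empty tableau acts as an empty row whose first inserted letter bumps nothing, so the
recursion is on the length of the inserted word, then on the number of rows. -/
theorem insertWord_eq_of_knuthEquiv : ∀ (T : List (List ℕ)) {w w' : List ℕ},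
    (∀ r ∈ T, r.Pairwise (· < ·)) → (readingWord T ++ w).Nodup → KnuthEquiv w w' →
    insertWord T w = insertWord T w'
  | [], [], w', _, _, hw => by rw [(KnuthEquiv.perm hw).nil_eq]
  | [], k :: w, w', _, h, hw => by
    obtain ⟨k', w', rfl⟩ := List.exists_cons_of_length_eq_add_one
      ((KnuthEquiv.perm hw).length_eq.symm.trans (List.length_cons ..))
    have h' : ([] ++ (k :: w)).Nodup := by simpa using h
    obtain ⟨hrow, hB⟩ := rowKnuthEquiv_of_knuthEquiv List.Pairwise.nil h' hw
    have := length_rowInsertWord_nil_cons_snd_le k w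
    rw [insertWord_nil_cons, insertWord_nil_cons, insertWord_cons, insertWord_cons, hrow,
      insertWord_eq_of_knuthEquiv [] (by simp)
        (by simpa using nodup_append_rowInsertWord_snd (L := []) List.Pairwise.nil h') hB]
  | r :: T, w, w', hT, h, hw => by
    have hr := hT r (by simp)
    rw [readingWord_cons] at h
    obtain ⟨hrow, hB⟩ := rowKnuthEquiv_of_knuthEquiv hr (h.sublist (by simp)) hw
    have := length_rowInsertWord_snd_le r w
    rw [insertWord_cons, insertWord_cons, hrow,
      insertWord_eq_of_knuthEquiv T (fun r' hr' => hT r' (by simp [hr']))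
        (nodup_append_rowInsertWord_snd hr h) hB]
termination_by T w => (w.length, T.length)
decreasing_by
  all_goals simp only [Prod.lex_def, List.length_cons]; omega

theorem Ptab_eq_of_knuthEquiv {w w' : List ℕ} (hw : w.Nodup) (h : KnuthEquiv w w') :
    Ptab w = Ptab w' :=
  insertWord_eq_of_knuthEquiv [] (by simp) (by simpa using hw) h

section ReadingWord

variable {T : List (List ℕ)}

theorem insertTab_pairwise {k : ℕ} (hT : ∀ r ∈ T, r.Pairwise (· < ·))
    (h : (readingWord T ++ [k]).Nodup) : ∀ r ∈ insertTab T k, r.Pairwise (· < ·) := by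
  induction T generalizing k with
  | nil => simp [insertTab]
  | cons r T ih =>
    rw [readingWord_cons] at h
    have hr := hT r (by simp)
    have hk : k ∉ r := fun hk =>
      List.disjoint_of_nodup_append h (List.mem_append_right _ hk) (List.mem_singleton_self k)
    have hnd := nodup_append_rowInsertWord_snd (w := [k]) hr h
    rw [insertTab_cons, List.forall_mem_cons]
    refine ⟨rowInsert_fst_pairwise hr hk, ?_⟩
    have hT' : ∀ r ∈ T, r.Pairwise (· < ·) := fun r' hr' => hT r' (by simp [hr'])
    rcases ho : (rowInsert r k).2 with _ | m
    · exact hT'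
    · exact ih hT' (by simpa [rowInsertWord, ho] using hnd)

theorem knuthEquiv_readingWord_insertTab {k : ℕ} (hT : ∀ r ∈ T, r.Pairwise (· < ·))
    (h : (readingWord T ++ [k]).Nodup) :
    KnuthEquiv (readingWord T ++ [k]) (readingWord (insertTab T k)) := by
  induction T generalizing k with
  | nil => exact .refl _
  | cons r T ih =>
    rw [readingWord_cons] at h
    have hr := hT r (by simp)
    have hk : k ∉ r := fun hk =>
      List.disjoint_of_nodup_append h (List.mem_append_right _ hk) (List.mem_singleton_self k)
    have hnd := nodup_append_rowInsertWord_snd (w := [k]) hr h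
    rw [readingWord_cons, insertTab_cons, readingWord_cons]
    refine .trans _ _ _ (by simpa using (knuthEquiv_rowInsert hr hk).append (readingWord T) []) ?_
    rcases ho : (rowInsert r k).2 with _ | m
    · exact .refl _
    · have hT' : ∀ r ∈ T, r.Pairwise (· < ·) := fun r' hr' => hT r' (by simp [hr'])
      simpa [insertWord] using
        (ih hT' (by simpa [rowInsertWord, ho] using hnd)).append [] (rowInsert r k).1

theorem knuthEquiv_readingWord_insertWord {w : List ℕ} (hT : ∀ r ∈ T, r.Pairwise (· < ·))
    (h : (readingWord T ++ w).Nodup) :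
    KnuthEquiv (readingWord T ++ w) (readingWord (insertWord T w)) := by
  induction w generalizing T with
  | nil => simpa using .refl _
  | cons k w ih =>
    have hk : (readingWord T ++ [k]).Nodup := h.sublist (by simp)
    have hK := knuthEquiv_readingWord_insertTab hT hk
    exact .trans _ _ _ (by simpa using hK.append [] w) <| ih (insertTab_pairwise hT hk) <|
      ((KnuthEquiv.perm hK).append_right w).nodup_iff.mp (by simpa using h)

end ReadingWord

theorem knuthEquiv_readingWord_Ptab {w : List ℕ} (hw : w.Nodup) :
    KnuthEquiv w (readingWord (Ptab w)) := by
  rw [Ptab_eq_insertWord]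
  simpa only [readingWord_nil, List.nil_append] using
    knuthEquiv_readingWord_insertWord (T := []) (by simp) (by simpa using hw)

theorem knuthEquiv_iff_Ptab_eq {w w' : List ℕ} (hw : w.Nodup) (hw' : w'.Nodup) :
    KnuthEquiv w w' ↔ Ptab w = Ptab w' := by
  refine ⟨Ptab_eq_of_knuthEquiv hw, fun h => ?_⟩
  refine .trans _ _ _ (knuthEquiv_readingWord_Ptab hw) ?_
  rw [h]
  exact .symm _ _ (knuthEquiv_readingWord_Ptab hw')

theorem getElem?_append_append_congr {u m m' v : List ℕ} (hm : m.length = m'.length) {j : ℕ}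
    (hj : j < u.length ∨ u.length + m.length ≤ j) : (u ++ m ++ v)[j]? = (u ++ m' ++ v)[j]? := by
  rcases hj with hj | hj
  · rw [List.append_assoc, List.append_assoc, List.getElem?_append_left hj,
      List.getElem?_append_left hj]
  · rw [List.getElem?_append_right (by simpa using hj),
      List.getElem?_append_right (by simp; omega)]
    simp [hm]

section Permutations

variable {n : ℕ} {x y : Equiv.Perm (Fin n)}

theorem length_permWord (x : Equiv.Perm (Fin n)) : (permWord x).length = n := by
  simp [permWord]

theorem getElem?_permWord (x : Equiv.Perm (Fin n)) (i : Fin n) :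
    (permWord x)[(i : ℕ)]? = some ((x i : ℕ) + 1) := by
  simp [permWord]

theorem permWord_nodup (x : Equiv.Perm (Fin n)) : (permWord x).Nodup :=
  (List.nodup_finRange n).map fun i j hij => x.injective (Fin.ext (by simpa [permWord] using hij))

theorem permWord_injective : Function.Injective (permWord (n := n)) := fun x y h =>
  Equiv.ext fun i => Fin.ext <| by simpa [getElem?_permWord] using
    (getElem?_permWord x i).symm.trans ((congrArg (·[(i : ℕ)]?) h).trans (getElem?_permWord y i))

theorem exists_permWord_eq_of_perm {w : List ℕ} (h : w.Perm (permWord x)) :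
    ∃ y : Equiv.Perm (Fin n), permWord y = w := by
  have hlen : w.length = n := by rw [h.length_eq, length_permWord]
  have hval (i : ℕ) (hi : i < w.length) : ∃ j : Fin n, w[i] = (x j : ℕ) + 1 := by
    obtain ⟨j, -, hj⟩ := List.mem_map.mp (h.subset (List.getElem_mem hi))
    exact ⟨j, hj.symm⟩
  let f (i : Fin n) : Fin n := ⟨w[(i : ℕ)]'(by omega) - 1, by
    obtain ⟨j, hj⟩ := hval i (by omega); omega⟩
  have hf : Function.Injective f := fun i j hij => by
    obtain ⟨i', hi'⟩ := hval i (by omega)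
    obtain ⟨j', hj'⟩ := hval j (by omega)
    have : w[(i : ℕ)]'(by omega) = w[(j : ℕ)]'(by omega) := by
      simp only [f, Fin.mk.injEq] at hij; omega
    exact Fin.ext ((h.nodup_iff.mpr (permWord_nodup x)).getElem_inj_iff.mp this)
  refine ⟨Equiv.ofBijective f (Finite.injective_iff_bijective.mp hf),
    List.ext_getElem? fun j => ?_⟩
  by_cases hj : j < n
  · obtain ⟨i, hi⟩ := hval j (by omega)
    rw [show j = ((⟨j, hj⟩ : Fin n) : ℕ) from rfl, getElem?_permWord,
      List.getElem?_eq_getElem (by omega)]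
    simp only [Equiv.ofBijective_apply, f, Option.some.injEq]
    omega
  · rw [List.getElem?_eq_none (by rw [length_permWord]; omega), List.getElem?_eq_none (by omega)]

theorem knuthMove_iff :
    KnuthMove x y ↔ ∃ i₀ i₁ i₂ : Fin n, (i₁ : ℕ) = i₀ + 1 ∧ (i₂ : ℕ) = i₀ + 2 ∧
      (∀ j, j ≠ i₀ → j ≠ i₁ → j ≠ i₂ → x j = y j) ∧
      ((y i₀ = x i₀ ∧ y i₁ = x i₂ ∧ y i₂ = x i₁ ∧
          (x i₁ < x i₀ ∧ x i₀ < x i₂ ∨ x i₂ < x i₀ ∧ x i₀ < x i₁)) ∨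
        (y i₂ = x i₂ ∧ y i₀ = x i₁ ∧ y i₁ = x i₀ ∧
          (x i₀ < x i₂ ∧ x i₂ < x i₁ ∨ x i₁ < x i₂ ∧ x i₂ < x i₀))) := by
  constructor
  · rintro ⟨p, hp, hp₂, h⟩
    exact ⟨⟨p - 1, by omega⟩, ⟨p, by omega⟩, ⟨p + 1, hp₂⟩, by simp; omega, by simp; omega, h⟩
  · rintro ⟨⟨i, hi⟩, ⟨_, hi₁⟩, ⟨_, hi₂⟩, rfl, rfl, h⟩
    exact ⟨i + 1, by omega, hi₂, h⟩

theorem KnuthMove.symm (h : KnuthMove x y) : KnuthMove y x := by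
  obtain ⟨i₀, i₁, i₂, h₁, h₂, hagree, hpat⟩ := knuthMove_iff.mp h
  refine knuthMove_iff.mpr ⟨i₀, i₁, i₂, h₁, h₂, fun j h₀ h₁ h₂ => (hagree j h₀ h₁ h₂).symm, ?_⟩
  rcases hpat with ⟨e₀, e₁, e₂, hlt⟩ | ⟨e₀, e₁, e₂, hlt⟩
  · exact .inl ⟨e₀.symm, e₂.symm, e₁.symm, by rw [e₀, e₁, e₂]; tauto⟩
  · exact .inr ⟨e₀.symm, e₂.symm, e₁.symm, by rw [e₀, e₁, e₂]; tauto⟩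

theorem knuthMove_of_permWord_eq_append {u v : List ℕ} {A B C A' B' C' : ℕ}
    (hx : permWord x = u ++ [A, B, C] ++ v) (hy : permWord y = u ++ [A', B', C'] ++ v)
    (hpat : (A' = A ∧ B' = C ∧ C' = B ∧ (B < A ∧ A < C ∨ C < A ∧ A < B)) ∨
      (C' = C ∧ A' = B ∧ B' = A ∧ (A < C ∧ C < B ∨ B < C ∧ C < A))) :
    KnuthMove x y := by
  have hn : u.length + 3 ≤ n := by
    have := congrArg List.length hx
    simp [length_permWord] at this
    omega
  have ex (i : Fin n) : (u ++ [A, B, C] ++ v)[(i : ℕ)]? = some ((x i : ℕ) + 1) :=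
    hx ▸ getElem?_permWord x i
  have ey (i : Fin n) : (u ++ [A', B', C'] ++ v)[(i : ℕ)]? = some ((y i : ℕ) + 1) :=
    hy ▸ getElem?_permWord y i
  obtain ⟨i₀, hi₀⟩ : ∃ i : Fin n, (i : ℕ) = u.length := ⟨⟨u.length, by omega⟩, rfl⟩
  obtain ⟨i₁, hi₁⟩ : ∃ i : Fin n, (i : ℕ) = u.length + 1 := ⟨⟨u.length + 1, by omega⟩, rfl⟩
  obtain ⟨i₂, hi₂⟩ : ∃ i : Fin n, (i : ℕ) = u.length + 2 := ⟨⟨u.length + 2, by omega⟩, rfl⟩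
  refine knuthMove_iff.mpr ⟨i₀, i₁, i₂, by omega, by omega, fun j h₀ h₁ h₂ => ?_, ?_⟩
  · have := getElem?_append_append_congr (u := u) (v := v) (m := [A, B, C])
      (m' := [A', B', C']) rfl (j := j) (by simp [Fin.ext_iff] at h₀ h₁ h₂; simp; omega)
    rw [ex, ey] at this
    simpa [Fin.ext_iff] using this
  · have x₀ := ex i₀
    have x₁ := ex i₁
    have x₂ := ex i₂
    have y₀ := ey i₀
    have y₁ := ey i₁
    have y₂ := ey i₂
    simp only [hi₀, hi₁, hi₂] at x₀ x₁ x₂ y₀ y₁ y₂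
    simp at x₀ x₁ x₂ y₀ y₁ y₂
    simp only [Fin.ext_iff, Fin.lt_def]
    omega

theorem knuthMove_of_knuthStep (h : KnuthStep (permWord x) (permWord y)) : KnuthMove x y := by
  generalize hx : permWord x = w at h
  generalize hy : permWord y = w' at h
  cases h with
  | bac_bca u v hab hbc => exact knuthMove_of_permWord_eq_append hx hy (by omega)
  | acb_cab u v hab hbc => exact knuthMove_of_permWord_eq_append hx hy (by omega)

theorem permWord_eq_append_of_agree {u m v : List ℕ} (hx : permWord x = u ++ m ++ v)
    (hm : m.length = 3) {i₀ i₁ i₂ : Fin n} (hi₀ : (i₀ : ℕ) = u.length)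
    (hi₁ : (i₁ : ℕ) = u.length + 1) (hi₂ : (i₂ : ℕ) = u.length + 2)
    (hagree : ∀ j, j ≠ i₀ → j ≠ i₁ → j ≠ i₂ → x j = y j) :
    permWord y = u ++ [(y i₀ : ℕ) + 1, (y i₁ : ℕ) + 1, (y i₂ : ℕ) + 1] ++ v := by
  have hlen : n = u.length + 3 + v.length := by
    simpa [length_permWord, hm, Nat.add_assoc] using congrArg List.length hx
  refine List.ext_getElem? fun j => ?_
  by_cases hj : j < n
  swap
  · rw [List.getElem?_eq_none (by rw [length_permWord]; omega),
      List.getElem?_eq_none (by simp; omega)]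
  obtain ⟨i, rfl⟩ : ∃ i : Fin n, (i : ℕ) = j := ⟨⟨j, hj⟩, rfl⟩
  rw [getElem?_permWord]
  by_cases h₀ : i = i₀
  · simp [h₀, hi₀]
  by_cases h₁ : i = i₁
  · simp [h₁, hi₁]
  by_cases h₂ : i = i₂
  · simp [h₂, hi₂]
  rw [← hagree i h₀ h₁ h₂, ← getElem?_permWord, hx]
  refine getElem?_append_append_congr (by simp [hm]) ?_
  simp only [Fin.ext_iff] at h₀ h₁ h₂
  omega

theorem knuthEquiv_of_knuthMove (h : KnuthMove x y) : KnuthEquiv (permWord x) (permWord y) := by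
  obtain ⟨i₀, i₁, i₂, h₁, h₂, hagree, hpat⟩ := knuthMove_iff.mp h
  have hsplit : permWord x = (permWord x).take i₀ ++ ((permWord x).drop i₀).take 3 ++
      ((permWord x).drop i₀).drop 3 := by
    simp
  have hm : (((permWord x).drop i₀).take 3).length = 3 := by
    simp only [List.length_take, List.length_drop, length_permWord]; omega
  have hi₀ : (i₀ : ℕ) = ((permWord x).take i₀).length := by
    simp only [List.length_take, length_permWord]; omega
  rw [permWord_eq_append_of_agree hsplit hm hi₀ (i₁ := i₁) (i₂ := i₂) (by omega) (by omega)
      fun _ _ _ _ => rfl,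
    permWord_eq_append_of_agree hsplit hm hi₀ (by omega) (by omega) hagree]
  rcases hpat with ⟨e₀, e₁, e₂, hlt | hlt⟩ | ⟨e₀, e₁, e₂, hlt | hlt⟩ <;> rw [e₀, e₁, e₂] <;>
    simp only [Fin.lt_def] at hlt
  · exact .rel _ _ (KnuthStep.bac_bca _ _ (by omega) (by omega))
  · exact .symm _ _ (.rel _ _ (KnuthStep.bac_bca _ _ (by omega) (by omega)))
  · exact .rel _ _ (KnuthStep.acb_cab _ _ (by omega) (by omega))
  · exact .symm _ _ (.rel _ _ (KnuthStep.acb_cab _ _ (by omega) (by omega)))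

theorem reflTransGen_knuthMove_iff :
    Relation.ReflTransGen KnuthMove x y ↔ KnuthEquiv (permWord x) (permWord y) := by
  refine ⟨fun h => ?_, fun h => ?_⟩
  · induction h with
    | refl => exact .refl _
    | tail _ hyz ih => exact .trans _ _ _ ih (knuthEquiv_of_knuthMove hyz)
  suffices ∀ w w', KnuthEquiv w w' → ∀ x y : Equiv.Perm (Fin n), permWord x = w →
      permWord y = w' → Relation.ReflTransGen KnuthMove x y from this _ _ h x y rfl rfl
  intro w w' h
  induction h with
  | rel _ _ h => rintro x y rfl rfl; exact .single (knuthMove_of_knuthStep h)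
  | refl => rintro x y rfl hxy; rw [permWord_injective hxy]
  | symm _ _ _ ih =>
    exact fun x y hx hy => Relation.ReflTransGen.mono (fun _ _ => KnuthMove.symm) _ _
      (Relation.ReflTransGen.swap _ _ (ih y x hy hx))
  | trans _ _ _ h₁₂ _ ih₁₂ ih₂₃ =>
    rintro x y rfl hy
    obtain ⟨z, rfl⟩ := exists_permWord_eq_of_perm (KnuthEquiv.perm h₁₂).symm
    exact (ih₁₂ x z rfl rfl).trans (ih₂₃ z y rfl hy)

end Permutations

/-- Two permutations are Knuth equivalent (related by a finite sequence of
elementary Knuth transformations) if and only if they have the same RS insertion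
tableau. -/
theorem stmt_12 {n : ℕ} (x y : Equiv.Perm (Fin n)) :
    Relation.ReflTransGen KnuthMove x y ↔ Ptab (permWord x) = Ptab (permWord y) := by
  rw [reflTransGen_knuthMove_iff, knuthEquiv_iff_Ptab_eq (permWord_nodup x) (permWord_nodup y)]
end

section
/- In the Hecke algebra of a Coxeter system, for any expression w̲ = (s_1,…,s_n) in S the Bott–Samelson element b_{s_1}b_{s_2}⋯b_{s_n} equals the sum over all subexpressions e of w̲ of v^{defect(e)} H_{(w̲^e)•}, where (w̲^e)• is the element of W expressed by the subexpression and defect(e) is the defect of the decorated 01-sequence. -/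
/-!
Generalise to `H_w · b_{s₁} ⋯ b_{sₙ}` for an arbitrary `w` and induct on the word. The quadratic
relation gives `H_w b_s = H_{ws} + v^{±1} H_w`, with `+` exactly when `ws > w`. The summand
`H_{ws}` continues the subexpressions that choose `s` (decoration `U1` or `D1`, no defect) and
`v^{±1} H_w` continues those that skip it (decoration `U0` or `D0`, defect `±1`).
-/

open LaurentPolynomial

variable {B W : Type*} [Group W] {M : CoxeterMatrix B}

/-- The element of `W` expressed by a subexpression: the product of the chosen letters. -/
def subProd (cs : CoxeterSystem M W) (l : List (B × Bool)) : W :=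
  cs.wordProd (l.filterMap fun p => if p.2 then some p.1 else none)

/-- Auxiliary defect computation: `w` is the product of the chosen letters so far;
a position decorated `U0` contributes `+1`, a position decorated `D0` contributes `-1`. -/
noncomputable def defectAux (cs : CoxeterSystem M W) : W → List (B × Bool) → ℤ
  | _, [] => 0
  | w, p :: rest =>
    (if p.2 then 0
     else if cs.length w < cs.length (w * cs.simple p.1) then 1 else -1)
      + defectAux cs (if p.2 then w * cs.simple p.1 else w) rest

/-- The defect of a 01-sequence `e` on the word `ω`. -/
noncomputable def defect (cs : CoxeterSystem M W) (ω : List B) (e : List Bool) : ℤ :=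
  defectAux cs 1 (ω.zip e)

theorem Fintype.sum_fun_fin_succ_ofFn {α N : Type*} [Fintype α] [AddCommMonoid N] (n : ℕ)
    (g : List α → N) :
    ∑ f : Fin (n + 1) → α, g (List.ofFn f) = ∑ a, ∑ f : Fin n → α, g (a :: List.ofFn f) := by
  rw [← Fintype.sum_prod_type']
  exact (Fintype.sum_equiv (Fin.consEquiv fun _ => α) _ _ fun p => by simp [List.ofFn_succ]).symm

lemma subProd_cons (cs : CoxeterSystem M W) (p : B × Bool) (l : List (B × Bool)) :
    subProd cs (p :: l) = (if p.2 then cs.simple p.1 else 1) * subProd cs l := by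
  rcases p with ⟨i, _ | _⟩ <;> simp [subProd, cs.wordProd_cons]

section StandardBasis

variable (cs : CoxeterSystem M W) {H : Type*} [Ring H] [Algebra (LaurentPolynomial ℤ) H]
  (std : Module.Basis W (LaurentPolynomial ℤ) H)

lemma std_mul_simple_of_length_mul_simple_lt
    (hmul : ∀ a c : W, cs.length (a * c) = cs.length a + cs.length c →
      std a * std c = std (a * c))
    (hquad : ∀ i : B, std (cs.simple i) * std (cs.simple i) =
      (T (-1) - T 1 : LaurentPolynomial ℤ) • std (cs.simple i) + 1)
    {w : W} {i : B} (h : cs.length (w * cs.simple i) < cs.length w) :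
    std w * std (cs.simple i) =
      (T (-1) - T 1 : LaurentPolynomial ℤ) • std w + std (w * cs.simple i) := by
  have hw : std (w * cs.simple i) * std (cs.simple i) = std w := by
    have hlen := cs.length_mul_simple w i
    rw [hmul _ _ (by rw [mul_assoc, cs.simple_mul_simple_self, mul_one, cs.length_simple]; omega),
      mul_assoc, cs.simple_mul_simple_self, mul_one]
  calc std w * std (cs.simple i)
      = std (w * cs.simple i) * (std (cs.simple i) * std (cs.simple i)) := by
        rw [← mul_assoc, hw]
    _ = (T (-1) - T 1 : LaurentPolynomial ℤ) • std w + std (w * cs.simple i) := by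
        rw [hquad, mul_add, mul_one, mul_smul_comm, hw]

lemma std_mul_bottSamelson
    (hmul : ∀ a c : W, cs.length (a * c) = cs.length a + cs.length c →
      std a * std c = std (a * c))
    (hquad : ∀ i : B, std (cs.simple i) * std (cs.simple i) =
      (T (-1) - T 1 : LaurentPolynomial ℤ) • std (cs.simple i) + 1)
    (w : W) (i : B) :
    std w * (std (cs.simple i) + (T 1 : LaurentPolynomial ℤ) • (1 : H)) =
      std (w * cs.simple i) +
        (T (if cs.length w < cs.length (w * cs.simple i) then 1 else -1)
          : LaurentPolynomial ℤ) • std w := by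
  rcases cs.length_mul_simple w i with h | h
  · rw [if_pos (by omega), mul_add, hmul _ _ (by rw [cs.length_simple, h]), mul_smul_comm,
      mul_one]
  · rw [if_neg (by omega), mul_add, std_mul_simple_of_length_mul_simple_lt cs std hmul hquad
      (by omega), mul_smul_comm, mul_one, sub_smul]
    abel

lemma std_mul_prod_bottSamelson
    (hmul : ∀ a c : W, cs.length (a * c) = cs.length a + cs.length c →
      std a * std c = std (a * c))
    (hquad : ∀ i : B, std (cs.simple i) * std (cs.simple i) =
      (T (-1) - T 1 : LaurentPolynomial ℤ) • std (cs.simple i) + 1)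
    (ω : List B) (w : W) :
    std w * (ω.map (fun i => std (cs.simple i) + (T 1 : LaurentPolynomial ℤ) • (1 : H))).prod =
      ∑ f : Fin ω.length → Bool,
        (T (defectAux cs w (ω.zip (List.ofFn f))) : LaurentPolynomial ℤ) •
          std (w * subProd cs (ω.zip (List.ofFn f))) := by
  induction ω generalizing w with
  | nil => simp [defectAux, subProd]
  | cons i ω ih =>
    have hchosen := ih (w * cs.simple i)
    have hskipped := congrArg
      ((T (if cs.length w < cs.length (w * cs.simple i) then 1 else -1) :
        LaurentPolynomial ℤ) • ·) (ih w)
    simp only [Finset.smul_sum, smul_smul, ← T_add] at hskipped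
    rw [List.map_cons, List.prod_cons, ← mul_assoc, std_mul_bottSamelson cs std hmul hquad,
      add_mul, smul_mul_assoc, hchosen, hskipped, eq_comm]
    refine (Fintype.sum_fun_fin_succ_ofFn ω.length fun e =>
      (T (defectAux cs w ((i :: ω).zip e)) : LaurentPolynomial ℤ) •
        std (w * subProd cs ((i :: ω).zip e))).trans ?_
    simp [List.zip_cons_cons, defectAux, subProd_cons, mul_assoc, add_comm]

end StandardBasis

/-- For any expression `ω = (s₁, …, sₙ)` the Bott–Samelson element
`b_{s₁} ⋯ b_{sₙ}` (with `b_s = H_s + v`) equals `Σ_e v^{defect(e)} H_{(ω^e)•}`, the sum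
running over all subexpressions (01-sequences) `e` of `ω`. -/
theorem stmt_19 (cs : CoxeterSystem M W)
    {H : Type*} [Ring H] [Algebra (LaurentPolynomial ℤ) H]
    (std : Module.Basis W (LaurentPolynomial ℤ) H)
    (hone : std 1 = 1)
    (hmul : ∀ a c : W, cs.length (a * c) = cs.length a + cs.length c →
      std a * std c = std (a * c))
    (hquad : ∀ i : B, std (cs.simple i) * std (cs.simple i) =
      (T (-1) - T 1 : LaurentPolynomial ℤ) • std (cs.simple i) + 1)
    (ω : List B) :
    (ω.map (fun i => std (cs.simple i) + (T 1 : LaurentPolynomial ℤ) • (1 : H))).prod =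
      ∑ f : Fin ω.length → Bool,
        (T (defect cs ω (List.ofFn f)) : LaurentPolynomial ℤ) •
          std (subProd cs (ω.zip (List.ofFn f))) := by
  simpa [hone, defect] using std_mul_prod_bottSamelson cs std hmul hquad ω 1
end
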